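/- arXiv:2604.19138 — 12 statements merged into one kernel-verified Lean document; each statement's English description precedes it below -/
import Mathlib

section
/- Let t be a positive integer and let G be a finite simple graph with component max-leaf at most t. Then for every nonempty vertex set S ⊆ V(G) such that the induced subgraph G[S] is connected, the neighborhood N_G(S) has at most t vertices. -/
open SimpleGraph

/-- `T` has at most `t` leaves, a leaf being a vertex of degree 1. -/
def LeafCountLE {α : Type*} (T : SimpleGraph α) (t : ℕ) : Prop :=
  {v : α | (T.neighborSet v).ncard = 1}.ncard ≤ t

/-- Every spanning tree of `H` has at most `t` leaves. -/
def MaxLeafLE {α : Type*} (H : SimpleGraph α) (t : ℕ) : Prop :=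
  ∀ T : SimpleGraph α, T ≤ H → T.IsTree → LeafCountLE T t

/-- `G` has component max-leaf at most `t`: every spanning tree of (the graph induced on)
every connected component of `G` has at most `t` leaves. -/
def CompMaxLeafLE {V : Type*} (G : SimpleGraph V) (t : ℕ) : Prop :=
  ∀ C : G.ConnectedComponent, MaxLeafLE (G.induce C.supp) t

/-- The (open, external) neighborhood `N_G(S)`: vertices outside `S` with a neighbor in `S`. -/
def extNeighborSet {V : Type*} (G : SimpleGraph V) (S : Set V) : Set V :=
  {v : V | v ∉ S ∧ ∃ u ∈ S, G.Adj u v}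

/-! Let `C` be the component containing `S`. Build a spanning tree of `G[C]` greedily: first a
tree on `S`, then every vertex of `N(S)` hung on `S` as a pendant leaf, then pendant edges until
all of `C` is covered. A pendant edge `uv` with `v` new destroys at most the leaf `u` and creates
the leaf `v`, so the final tree keeps at least `|N(S)|` leaves. -/

namespace SimpleGraph

variable {W : Type*}

def leafSet (T : SimpleGraph W) : Set W := {v | (T.neighborSet v).ncard = 1}

structure IsSubtreeOn (H T : SimpleGraph W) (B : Set W) : Prop where
  le : T ≤ H
  mem_of_adj : ∀ ⦃x y : W⦄, T.Adj x y → x ∈ B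
  reachable : ∀ x ∈ B, ∀ y ∈ B, T.Reachable x y
  isAcyclic : T.IsAcyclic

section PendantEdge

variable {T : SimpleGraph W} {u v : W}

lemma neighborSet_sup_edge_right (hv : T.neighborSet v = ∅) (huv : u ≠ v) :
    (T ⊔ edge u v).neighborSet v = {u} := by
  ext y
  have : ¬ T.Adj v y := fun h => (hv ▸ h : y ∈ (∅ : Set W))
  simp only [mem_neighborSet, sup_adj, edge_adj, Set.mem_singleton_iff]
  grind

lemma neighborSet_sup_edge_of_ne {x : W} (hxu : x ≠ u) (hxv : x ≠ v) :
    (T ⊔ edge u v).neighborSet x = T.neighborSet x := by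
  ext y
  simp only [mem_neighborSet, sup_adj, edge_adj]
  grind

lemma insert_leafSet_sdiff_subset (hv : T.neighborSet v = ∅) (huv : u ≠ v) :
    insert v (T.leafSet \ {u}) ⊆ (T ⊔ edge u v).leafSet := by
  rintro x (rfl | ⟨hx, hxu⟩)
  · exact (congrArg Set.ncard (neighborSet_sup_edge_right hv huv)).trans (Set.ncard_singleton u)
  · have hxv : x ≠ v := by rintro rfl; simp [leafSet, hv] at hx
    exact (congrArg Set.ncard (neighborSet_sup_edge_of_ne hxu hxv)).trans hx

lemma ncard_leafSet_le_sup_edge [Finite W] (hv : T.neighborSet v = ∅) (huv : u ≠ v) :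
    T.leafSet.ncard ≤ (T ⊔ edge u v).leafSet.ncard := by
  have hvT : v ∉ T.leafSet \ {u} := fun h => by simp [leafSet, hv] at h
  calc T.leafSet.ncard ≤ (T.leafSet \ {u}).ncard + 1 := by
        have := Set.pred_ncard_le_ncard_sdiff_singleton T.leafSet u
        omega
    _ = (insert v (T.leafSet \ {u})).ncard := (Set.ncard_insert_of_notMem hvT).symm
    _ ≤ (T ⊔ edge u v).leafSet.ncard :=
        Set.ncard_le_ncard (insert_leafSet_sdiff_subset hv huv)

end PendantEdge

lemma Preconnected.exists_adj_of_ssubset {H : SimpleGraph W} {A B : Set W}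
    (hA : (H.induce A).Preconnected) (hBA : B ⊆ A) (hB : B.Nonempty) (hAB : ¬ A ⊆ B) :
    ∃ u ∈ B, ∃ v ∈ A, v ∉ B ∧ H.Adj u v := by
  obtain ⟨b, hb⟩ := hB
  obtain ⟨w, hwA, hwB⟩ := Set.not_subset.mp hAB
  obtain ⟨p⟩ := hA ⟨b, hBA hb⟩ ⟨w, hwA⟩
  obtain ⟨d, -, hd₁, hd₂⟩ := p.exists_boundary_dart (Subtype.val ⁻¹' B) hb hwB
  exact ⟨d.fst, hd₁, d.snd, d.snd.2, hd₂, d.adj⟩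

namespace IsSubtreeOn

variable {H T : SimpleGraph W} {A B : Set W} {u v : W}

lemma neighborSet_eq_empty (hT : IsSubtreeOn H T B) (hv : v ∉ B) : T.neighborSet v = ∅ :=
  Set.eq_empty_of_forall_notMem fun _ h => hv (hT.mem_of_adj h)

lemma bot_singleton (a : W) : IsSubtreeOn H ⊥ {a} where
  le := bot_le
  mem_of_adj _ _ h := h.elim
  reachable := by rintro x rfl y rfl; rfl
  isAcyclic := isAcyclic_bot

lemma isTree_of_univ [Nonempty W] (hT : IsSubtreeOn H T Set.univ) : T.IsTree :=
  ⟨⟨fun x y => hT.reachable x trivial y trivial⟩, hT.isAcyclic⟩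

lemma sup_edge (hT : IsSubtreeOn H T B) (hu : u ∈ B) (hv : v ∉ B) (huv : H.Adj u v) :
    IsSubtreeOn H (T ⊔ edge u v) (insert v B) where
  le := sup_le hT.le ((edge_le_iff H).mpr (Or.inr huv))
  mem_of_adj x y h := by
    rcases h with h | h
    · exact Or.inr (hT.mem_of_adj h)
    · rw [edge_adj] at h
      rcases h with ⟨⟨rfl, rfl⟩ | ⟨rfl, rfl⟩, -⟩
      exacts [Or.inr hu, Or.inl rfl]
  reachable := by
    have hv_reach : ∀ x ∈ B, (T ⊔ edge u v).Reachable x v := fun x hx =>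
      ((hT.reachable x hx u hu).mono le_sup_left).trans
        (Adj.reachable (Or.inr ((edge_adj ..).mpr ⟨Or.inl ⟨rfl, rfl⟩, huv.ne⟩)))
    rintro x (rfl | hx) y (rfl | hy)
    · rfl
    · exact (hv_reach y hy).symm
    · exact hv_reach x hx
    · exact (hT.reachable x hx y hy).mono le_sup_left
  isAcyclic := by
    refine hT.isAcyclic.sup_edge_of_not_reachable fun ⟨p⟩ => ?_
    cases p.reverse with
    | nil => exact huv.ne rfl
    | cons h _ => exact hv (hT.mem_of_adj h)

variable [Finite W]

lemma exists_extend (hA : (H.induce A).Preconnected) (hT : IsSubtreeOn H T B) (hBA : B ⊆ A)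
    (hB : B.Nonempty) :
    ∃ T', IsSubtreeOn H T' A ∧ T.leafSet.ncard ≤ T'.leafSet.ncard := by
  induction hn : (A \ B).ncard generalizing B T with
  | zero =>
    have hAB : A ⊆ B := Set.sdiff_eq_empty.mp ((Set.ncard_eq_zero).mp hn)
    exact ⟨T, hBA.antisymm hAB ▸ hT, le_rfl⟩
  | succ n ih =>
    have hAB : ¬ A ⊆ B := fun h => by simp [Set.sdiff_eq_empty.mpr h] at hn
    obtain ⟨u, hu, v, hvA, hvB, huv⟩ := hA.exists_adj_of_ssubset hBA hB hAB
    have hn' : (A \ insert v B).ncard = n := by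
      rw [Set.insert_eq, Set.union_comm, ← Set.sdiff_sdiff,
        Set.ncard_sdiff_singleton_of_mem (show v ∈ A \ B from ⟨hvA, hvB⟩), hn, Nat.add_sub_cancel]
    obtain ⟨T', hT', hle⟩ :=
      ih (hT.sup_edge hu hvB huv) (Set.insert_subset hvA hBA) (hB.mono (Set.subset_insert _ _)) hn'
    exact ⟨T', hT',
      (ncard_leafSet_le_sup_edge (hT.neighborSet_eq_empty hvB) huv.ne).trans hle⟩

lemma exists_attach_leaves (hT : IsSubtreeOn H T A) {F : Set W} (hF : F ⊆ extNeighborSet H A) :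
    ∃ T', IsSubtreeOn H T' (A ∪ F) ∧ F ⊆ T'.leafSet := by
  induction F, F.toFinite using Set.Finite.induction_on with
  | empty => exact ⟨T, by simpa using hT, Set.empty_subset _⟩
  | @insert v F hvF _ ih =>
    obtain ⟨T', hT', hleaves⟩ := ih ((Set.subset_insert _ _).trans hF)
    obtain ⟨hvA, u, hu, huv⟩ := hF (Set.mem_insert _ _)
    have hv : v ∉ A ∪ F := by rintro (h | h) <;> contradiction
    refine ⟨T' ⊔ edge u v, Set.union_insert ▸ hT'.sup_edge (Or.inl hu) hv huv, ?_⟩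
    rintro x (rfl | hx)
    · exact insert_leafSet_sdiff_subset (hT'.neighborSet_eq_empty hv) huv.ne (Set.mem_insert _ _)
    · have hxu : x ≠ u := by rintro rfl; exact (hF (Set.mem_insert_of_mem _ hx)).1 hu
      refine insert_leafSet_sdiff_subset (hT'.neighborSet_eq_empty hv) huv.ne
        (Set.mem_insert_of_mem _ ⟨hleaves hx, hxu⟩)

end IsSubtreeOn

theorem Connected.exists_isTree_ncard_extNeighborSet_le [Finite W] {H : SimpleGraph W}
    (hH : H.Connected) {A : Set W} (hA : (H.induce A).Connected) :
    ∃ T ≤ H, T.IsTree ∧ (extNeighborSet H A).ncard ≤ T.leafSet.ncard := by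
  obtain ⟨⟨a, ha⟩⟩ := hA.nonempty
  have : Nonempty W := ⟨a⟩
  obtain ⟨T₀, hT₀, -⟩ := (IsSubtreeOn.bot_singleton a).exists_extend hA.preconnected
    (Set.singleton_subset_iff.mpr ha) (Set.singleton_nonempty a)
  obtain ⟨T₁, hT₁, hleaves⟩ := hT₀.exists_attach_leaves subset_rfl
  have hH' : (H.induce Set.univ).Preconnected :=
    ((induceUnivIso H).connected_iff.mpr hH).preconnected
  obtain ⟨T, hT, hle⟩ := hT₁.exists_extend hH' (Set.subset_univ _) ⟨a, Or.inl ha⟩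
  exact ⟨T, hT.le, hT.isTree_of_univ, (Set.ncard_le_ncard hleaves).trans hle⟩

section Induce

variable {V : Type*} {G : SimpleGraph V} {S s : Set V}

lemma Connected.exists_subset_supp (hS : (G.induce S).Connected) :
    ∃ C : G.ConnectedComponent, S ⊆ C.supp := by
  obtain ⟨⟨v, hv⟩⟩ := hS.nonempty
  exact ⟨G.connectedComponentMk v, fun u hu =>
    ConnectedComponent.sound ((hS.preconnected ⟨u, hu⟩ ⟨v, hv⟩).map (Embedding.induce S).toHom)⟩

lemma extNeighborSet_subset_supp {C : G.ConnectedComponent} (hS : S ⊆ C.supp) :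
    extNeighborSet G S ⊆ C.supp :=
  fun _ ⟨_, _, hu, huv⟩ => C.mem_supp_of_adj_mem_supp (hS hu) huv

lemma Connected.induce_preimage_val (hS : (G.induce S).Connected) (hSs : S ⊆ s) :
    ((G.induce s).induce (Subtype.val ⁻¹' S)).Connected :=
  hS.map ⟨fun x : S => ⟨⟨x, hSs x.2⟩, x.2⟩, id⟩ fun y => ⟨⟨y.1.1, y.2⟩, rfl⟩

lemma image_val_extNeighborSet_induce (hS : S ⊆ s) :
    Subtype.val '' extNeighborSet (G.induce s) (Subtype.val ⁻¹' S) = extNeighborSet G S ∩ s := by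
  ext v
  constructor
  · rintro ⟨x, ⟨hxS, u, huS, hux⟩, rfl⟩
    exact ⟨⟨hxS, u, huS, hux⟩, x.2⟩
  · rintro ⟨⟨hvS, u, huS, huv⟩, hv⟩
    exact ⟨⟨v, hv⟩, ⟨hvS, ⟨u, hS huS⟩, huS, huv⟩, rfl⟩

lemma ncard_extNeighborSet_induce_preimage_val (hS : S ⊆ s) (hN : extNeighborSet G S ⊆ s) :
    (extNeighborSet (G.induce s) (Subtype.val ⁻¹' S)).ncard = (extNeighborSet G S).ncard := by
  rw [← Set.ncard_image_of_injective _ Subtype.val_injective, image_val_extNeighborSet_induce hS,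
    Set.inter_eq_left.mpr hN]

end Induce

end SimpleGraph

theorem stmt0_general {V : Type*} [Fintype V] (G : SimpleGraph V) (t : ℕ)
    (hG : CompMaxLeafLE G t) (S : Set V)
    (hconn : (G.induce S).Connected) :
    (extNeighborSet G S).ncard ≤ t := by
  obtain ⟨C, hSC⟩ := hconn.exists_subset_supp
  obtain ⟨T, hTle, hT, hleaves⟩ :=
    C.connected_toSimpleGraph.exists_isTree_ncard_extNeighborSet_le (hconn.induce_preimage_val hSC)
  calc (extNeighborSet G S).ncard
      = (extNeighborSet (G.induce C.supp) (Subtype.val ⁻¹' S)).ncard :=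
        (ncard_extNeighborSet_induce_preimage_val hSC (extNeighborSet_subset_supp hSC)).symm
    _ ≤ T.leafSet.ncard := hleaves
    _ ≤ t := hG C T hTle hT

theorem stmt0 {V : Type*} [Fintype V] (G : SimpleGraph V) (t : ℕ) (ht : 0 < t)
    (hG : CompMaxLeafLE G t) (S : Set V) (hS : S.Nonempty)
    (hconn : (G.induce S).Connected) :
    (extNeighborSet G S).ncard ≤ t :=
  stmt0_general G t hG S hconn
end

section
/- For all natural numbers t and n with 3 ≤ t ≤ n, the sum of binomial coefficients ∑_{i=0}^{t} C(n, i) is at most n^t / t; equivalently, t · ∑_{i=0}^{t} C(n, i) ≤ n^t. -/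
theorem stmt2 (t n : ℕ) (h3 : 3 ≤ t) (htn : t ≤ n) :
    t * ∑ i ∈ Finset.range (t + 1), n.choose i ≤ n ^ t := by
  induction t, h3 using Nat.le_induction generalizing n with
  | base =>
    obtain ⟨m, rfl⟩ := Nat.exists_eq_add_of_le htn
    have e1 : 3 + m - 2 = 1 + m := by omega
    have e2 : 3 + m - 1 = 2 + m := by omega
    have hd2 : (3 + m).descFactorial 2 = (2 + m) * (3 + m) := by
      simp [Nat.descFactorial, e2]
    have hd3 : (3 + m).descFactorial 3 = (1 + m) * ((2 + m) * (3 + m)) := by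
      simp [Nat.descFactorial, e1, e2]
    rw [Nat.descFactorial_eq_factorial_mul_choose] at hd2 hd3
    norm_num [Nat.factorial] at hd2 hd3
    simp [Finset.sum_range_succ]
    nlinarith [hd2, hd3, sq_nonneg m]
  | succ t ht IH =>
    obtain ⟨s, rfl⟩ : ∃ s, t = s + 3 := ⟨t - 3, by omega⟩
    set t := s + 3 with htdef
    have hIH := IH n (by omega)
    have hC : Nat.factorial (t + 1) * n.choose (t + 1) ≤ n ^ (t + 1) := by
      rw [← Nat.descFactorial_eq_factorial_mul_choose]
      exact Nat.descFactorial_le_pow n (t + 1)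
    have hpow : (t + 1) * n ^ t ≤ n ^ (t + 1) := by
      rw [pow_succ, mul_comm]
      exact Nat.mul_le_mul_left _ (by omega)
    have hfac : t * (t + 1) ≤ (s + 2) * Nat.factorial (t + 1) := by
      have h1 : t ≤ Nat.factorial t := Nat.self_le_factorial t
      rw [Nat.factorial_succ]
      calc t * (t + 1) = 1 * ((t + 1) * t) := by ring
        _ ≤ (s + 2) * ((t + 1) * Nat.factorial t) :=
            Nat.mul_le_mul (by omega) (Nat.mul_le_mul_left _ h1)
    rw [Finset.sum_range_succ]
    have key : t * ((t + 1) * ((∑ i ∈ Finset.range (t + 1), n.choose i) + n.choose (t + 1)))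
        ≤ t * n ^ (t + 1) := by
      calc t * ((t + 1) * ((∑ i ∈ Finset.range (t + 1), n.choose i) + n.choose (t + 1)))
          = (t + 1) * (t * ∑ i ∈ Finset.range (t + 1), n.choose i)
            + (t * (t + 1)) * n.choose (t + 1) := by ring
        _ ≤ (t + 1) * n ^ t + ((s + 2) * Nat.factorial (t + 1)) * n.choose (t + 1) :=
            add_le_add (Nat.mul_le_mul_left _ hIH) (Nat.mul_le_mul_right _ hfac)
        _ ≤ n ^ (t + 1) + (s + 2) * n ^ (t + 1) := by
            refine add_le_add hpow ?_
            rw [mul_assoc]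
            exact Nat.mul_le_mul_left _ hC
        _ = t * n ^ (t + 1) := by rw [htdef]; ring
    exact Nat.le_of_mul_le_mul_left key (by omega)
end

section
/- Let k be a positive integer, set a = 1 − 1/(2k+3), and let G be a finite simple graph with a weight function w : V(G) → ℝ≥0. Suppose that for every induced subgraph H of G there exist a set D ⊆ V(H) with |D| ≤ k and an a-balanced separator S of (H, w restricted to V(H)) with S ⊆ ∪_{v ∈ D} N_H(v). Then there exist a set D' ⊆ V(G) with |D'| ≤ k(k+2) and a (2/3)-balanced separator S' of (G, w) with S' ⊆ ∪_{v ∈ D'} N_G(v). -/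
open SimpleGraph

/-- The total weight of a set of vertices. -/
noncomputable def wsum {V : Type*} (w : V → ℝ) (s : Set V) : ℝ := ∑ᶠ v ∈ s, w v

/-- `X` is an `a`-balanced separator of the weighted graph `(G, w)`: every connected
component of `G − X` has weight at most `a` times the total weight. -/
def IsBalSep {V : Type*} (G : SimpleGraph V) (w : V → ℝ) (a : ℝ) (X : Set V) : Prop :=
  ∀ C : (G.induce Xᶜ).ConnectedComponent,
    wsum w (Subtype.val '' C.supp) ≤ a * wsum w Set.univ

/-!
Start from the empty separator and repeat the following round. If `G − S` has a component `C`
of weight more than `2/3` of the total, it is the only one; apply the hypothesis to `G[C]` and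
add the resulting separator (dominated by at most `k` vertices) to `S`. The components of the
new `G − S` inside `C` weigh at most `a · w(C)`, and those outside `C` stay light. After `i`
rounds every component weighs at most `max (2/3) (a ^ i)` of the total, and
`(1 - 1/(2k+3)) ^ (k + 2) ≤ 2/3` by Bernoulli's inequality, so `k + 2` rounds suffice.
-/

section Weight

variable {V : Type*} (w : V → ℝ)

lemma wsum_eq_sum_toFinset {s : Set V} (hs : s.Finite) : wsum w s = ∑ v ∈ hs.toFinset, w v := by
  rw [wsum, ← finsum_mem_coe_finset, Set.Finite.coe_toFinset]

lemma wsum_image_val {W : Set V} (s : Set W) :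
    wsum (fun v : W => w v) s = wsum w (Subtype.val '' s) := by
  rw [wsum, wsum, finsum_mem_image Subtype.val_injective.injOn]

variable [Finite V]

lemma wsum_nonneg (hw : ∀ v, 0 ≤ w v) (s : Set V) : 0 ≤ wsum w s := by
  rw [wsum_eq_sum_toFinset w s.toFinite]
  exact Finset.sum_nonneg fun v _ => hw v

lemma wsum_mono (hw : ∀ v, 0 ≤ w v) {s t : Set V} (hst : s ⊆ t) : wsum w s ≤ wsum w t := by
  rw [wsum_eq_sum_toFinset w s.toFinite, wsum_eq_sum_toFinset w t.toFinite]
  exact Finset.sum_le_sum_of_subset_of_nonneg (by simpa using hst) fun v _ _ => hw v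

lemma wsum_union {s t : Set V} (hst : Disjoint s t) : wsum w (s ∪ t) = wsum w s + wsum w t :=
  finsum_mem_union hst s.toFinite t.toFinite

end Weight

lemma one_sub_one_div_two_mul_add_three_pow_le (k : ℕ) :
    (1 - 1 / (2 * k + 3) : ℝ) ^ (k + 2) ≤ 2 / 3 := by
  have hk : (0 : ℝ) < 2 * k + 2 := by positivity
  have hbernoulli : (3 / 2 : ℝ) ≤ (1 + 1 / (2 * k + 2)) ^ (k + 2) := by
    refine le_trans ?_ (one_add_mul_le_pow (by linarith [one_div_nonneg.mpr hk.le]) (k + 2))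
    rw [mul_one_div, ← sub_le_iff_le_add', le_div_iff₀ hk]
    push_cast
    linarith
  have hinv : (1 - 1 / (2 * k + 3) : ℝ) = ((1 + 1 / (2 * k + 2) : ℝ))⁻¹ := by
    field_simp
    ring
  rw [hinv, inv_pow]
  calc ((1 + 1 / (2 * k + 2) : ℝ) ^ (k + 2))⁻¹
      ≤ (3 / 2)⁻¹ := inv_anti₀ (by norm_num) hbernoulli
    _ = 2 / 3 := by norm_num

namespace SimpleGraph

variable {V : Type*} {G : SimpleGraph V}

lemma Connected.exists_range_subset_supp {W : Type*} {H : SimpleGraph W} (hG : G.Connected)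
    (f : G →g H) : ∃ Y : H.ConnectedComponent, Set.range f ⊆ Y.supp := by
  obtain ⟨v⟩ := hG.nonempty
  refine ⟨H.connectedComponentMk (f v), ?_⟩
  rintro _ ⟨x, rfl⟩
  exact ConnectedComponent.eq.mpr ((hG.preconnected v x).map f).symm

lemma image_val_supp_subset_map_induceHomOfLE {A B : Set V} (hAB : A ⊆ B)
    (Z : (G.induce A).ConnectedComponent) :
    Subtype.val '' Z.supp ⊆ Subtype.val '' (Z.map (G.induceHomOfLE hAB).toHom).supp := by
  rintro _ ⟨z, hz, rfl⟩
  refine ⟨Set.inclusion hAB z, ?_, rfl⟩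
  rw [ConnectedComponent.mem_supp_iff] at hz ⊢
  rw [← hz, ConnectedComponent.map_mk]
  rfl

lemma image_val_subset_iUnion_neighborSet {K : Set V} {D S : Set K}
    (hS : S ⊆ ⋃ v ∈ D, (G.induce K).neighborSet v) :
    Subtype.val '' S ⊆ ⋃ v ∈ Subtype.val '' D, G.neighborSet v := by
  rintro _ ⟨s, hs, rfl⟩
  obtain ⟨d, hd, hds⟩ := Set.mem_iUnion₂.mp (hS hs)
  exact Set.mem_iUnion₂.mpr ⟨d, ⟨d, hd, rfl⟩, hds⟩

lemma exists_supp_subset_of_image_val_supp_subset {X K : Set V} {S : Set K}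
    (Z : (G.induce (X ∪ Subtype.val '' S)ᶜ).ConnectedComponent)
    (hZK : Subtype.val '' Z.supp ⊆ K) :
    ∃ Y : ((G.induce K).induce Sᶜ).ConnectedComponent,
      Subtype.val '' Z.supp ⊆ Subtype.val '' (Subtype.val '' Y.supp) := by
  have hZS (z : Z.supp) : (⟨z.1.1, hZK ⟨z.1, z.2, rfl⟩⟩ : K) ∉ S := fun hS =>
    z.1.2 (Or.inr ⟨_, hS, rfl⟩)
  let f : Z.toSimpleGraph →g (G.induce K).induce Sᶜ :=
    ⟨fun z => ⟨⟨z.1.1, hZK ⟨z.1, z.2, rfl⟩⟩, hZS z⟩, id⟩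
  obtain ⟨Y, hY⟩ := Z.connected_toSimpleGraph.exists_range_subset_supp f
  refine ⟨Y, ?_⟩
  rintro _ ⟨z, hz, rfl⟩
  exact ⟨_, ⟨_, hY ⟨⟨z, hz⟩, rfl⟩, rfl⟩, rfl⟩

end SimpleGraph

section Separator

variable {V : Type*} {G : SimpleGraph V} [Finite V] {w : V → ℝ}

lemma wsum_supp_add_wsum_supp_le (hw : ∀ v, 0 ≤ w v) {X : Set V}
    {C C' : (G.induce X).ConnectedComponent} (hCC' : C ≠ C') :
    wsum w (Subtype.val '' C.supp) + wsum w (Subtype.val '' C'.supp) ≤ wsum w Set.univ := by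
  have hdisj : Disjoint C.supp C'.supp := by
    rw [Set.disjoint_left]
    intro x hx hx'
    exact hCC' (((C.mem_supp_iff x).mp hx).symm.trans ((C'.mem_supp_iff x).mp hx'))
  rw [← wsum_union w (Set.disjoint_image_of_injective Subtype.val_injective hdisj)]
  exact wsum_mono w hw (Set.subset_univ _)

lemma IsBalSep.mono (hw : ∀ v, 0 ≤ w v) {a b : ℝ} (hab : a ≤ b) {X : Set V}
    (hX : IsBalSep G w a X) : IsBalSep G w b X := fun C =>
  (hX C).trans (mul_le_mul_of_nonneg_right hab (wsum_nonneg w hw _))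

lemma isBalSep_union_image_val (hw : ∀ v, 0 ≤ w v) {a b : ℝ} (ha : 0 ≤ a) {X : Set V}
    {C : (G.induce Xᶜ).ConnectedComponent}
    (hC : 2 / 3 * wsum w Set.univ < wsum w (Subtype.val '' C.supp))
    (hCb : wsum w (Subtype.val '' C.supp) ≤ b * wsum w Set.univ) {S : Set (Subtype.val '' C.supp)}
    (hS : IsBalSep (G.induce (Subtype.val '' C.supp)) (fun v => w v) a S) :
    IsBalSep G w (max (2 / 3) (a * b)) (X ∪ Subtype.val '' S) := by
  intro Z
  have hXS : (X ∪ Subtype.val '' S)ᶜ ⊆ Xᶜ :=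
    Set.compl_subset_compl.mpr Set.subset_union_left
  have hZC' := image_val_supp_subset_map_induceHomOfLE hXS Z
  set C' := Z.map (G.induceHomOfLE hXS).toHom
  have hmax := max_mul_of_nonneg (2 / 3) (a * b) (wsum_nonneg w hw Set.univ)
  by_cases hC'C : C' = C
  · rw [hC'C] at hZC'
    obtain ⟨Y, hZY⟩ := exists_supp_subset_of_image_val_supp_subset Z hZC'
    have hY := hS Y
    rw [wsum_image_val, wsum_image_val, Set.image_univ, Subtype.range_coe] at hY
    calc wsum w (Subtype.val '' Z.supp)
        ≤ wsum w (Subtype.val '' (Subtype.val '' Y.supp)) := wsum_mono w hw hZY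
      _ ≤ a * (b * wsum w Set.univ) := hY.trans (mul_le_mul_of_nonneg_left hCb ha)
      _ ≤ max (2 / 3) (a * b) * wsum w Set.univ := by
        rw [hmax, ← mul_assoc]
        exact le_max_right _ _
  · have hCC' := wsum_supp_add_wsum_supp_le hw hC'C
    have hZ := wsum_mono w hw hZC'
    have hW := wsum_nonneg w hw Set.univ
    rw [hmax]
    exact le_max_of_le_left (by linarith)

lemma exists_isBalSep_max_pow (hw : ∀ v, 0 ≤ w v) {a : ℝ} (ha : 0 ≤ a) {k : ℕ}
    (h : ∀ W : Set V, ∃ D S : Set ↥W, D.ncard ≤ k ∧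
      S ⊆ (⋃ v ∈ D, (G.induce W).neighborSet v) ∧ IsBalSep (G.induce W) (fun v => w v) a S)
    (i : ℕ) : ∃ D S : Set V, D.ncard ≤ k * i ∧ S ⊆ (⋃ v ∈ D, G.neighborSet v) ∧
      IsBalSep G w (max (2 / 3) (a ^ i)) S := by
  induction i with
  | zero =>
    refine ⟨∅, ∅, by simp, by simp, fun C => ?_⟩
    rw [pow_zero, max_eq_right (by norm_num), one_mul]
    exact wsum_mono w hw (Set.subset_univ _)
  | succ i ih =>
    obtain ⟨D, S, hD, hSD, hS⟩ := ih
    by_cases hlight : IsBalSep G w (2 / 3) S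
    · exact ⟨D, S, hD.trans (Nat.mul_le_mul_left k i.le_succ), hSD,
        hlight.mono hw (le_max_left _ _)⟩
    obtain ⟨C, hC⟩ : ∃ C : (G.induce Sᶜ).ConnectedComponent,
        2 / 3 * wsum w Set.univ < wsum w (Subtype.val '' C.supp) := by
      simpa [IsBalSep] using hlight
    have hCi : wsum w (Subtype.val '' C.supp) ≤ a ^ i * wsum w Set.univ := by
      have := hS C
      rw [max_mul_of_nonneg _ _ (wsum_nonneg w hw _), le_max_iff] at this
      exact this.resolve_left hC.not_ge
    obtain ⟨DC, SC, hDC, hSCDC, hSC⟩ := h (Subtype.val '' C.supp)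
    refine ⟨D ∪ Subtype.val '' DC, S ∪ Subtype.val '' SC, ?_, ?_, ?_⟩
    · calc (D ∪ Subtype.val '' DC).ncard ≤ D.ncard + DC.ncard := by
            rw [← Set.ncard_image_of_injective DC Subtype.val_injective]
            exact Set.ncard_union_le _ _
        _ ≤ k * (i + 1) := by rw [mul_add_one]; exact add_le_add hD hDC
    · rw [Set.biUnion_union]
      exact Set.union_subset_union hSD (image_val_subset_iUnion_neighborSet hSCDC)
    · rw [pow_succ']
      exact isBalSep_union_image_val hw ha hC hCi hSC

end Separator

theorem stmt4_general {V : Type*} [Fintype V] (G : SimpleGraph V) (w : V → ℝ)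
    (hw : ∀ v, 0 ≤ w v) (k : ℕ)
    (h : ∀ W : Set V, ∃ D S : Set ↥W, D.ncard ≤ k ∧
      S ⊆ (⋃ v ∈ D, (G.induce W).neighborSet v) ∧
      IsBalSep (G.induce W) (fun v => w v) (1 - 1 / (2 * k + 3)) S) :
    ∃ D' S' : Set V, D'.ncard ≤ k * (k + 2) ∧
      S' ⊆ (⋃ v ∈ D', G.neighborSet v) ∧
      IsBalSep G w (2 / 3) S' := by
  have ha : (0 : ℝ) ≤ 1 - 1 / (2 * k + 3) := by
    rw [sub_nonneg, div_le_one (by positivity)]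
    linarith [k.cast_nonneg (α := ℝ)]
  obtain ⟨D, S, hD, hSD, hS⟩ := exists_isBalSep_max_pow hw ha h (k + 2)
  exact ⟨D, S, hD, hSD,
    hS.mono hw (max_le le_rfl (one_sub_one_div_two_mul_add_three_pow_le k))⟩

theorem stmt4 {V : Type*} [Fintype V] (G : SimpleGraph V) (w : V → ℝ)
    (hw : ∀ v, 0 ≤ w v) (k : ℕ) (hk : 0 < k)
    (h : ∀ W : Set V, ∃ D S : Set ↥W, D.ncard ≤ k ∧
      S ⊆ (⋃ v ∈ D, (G.induce W).neighborSet v) ∧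
      IsBalSep (G.induce W) (fun v => w v) (1 - 1 / (2 * k + 3)) S) :
    ∃ D' S' : Set V, D'.ncard ≤ k * (k + 2) ∧
      S' ⊆ (⋃ v ∈ D', G.neighborSet v) ∧
      IsBalSep G w (2 / 3) S' :=
  stmt4_general G w hw k h
end

section
/- Let a and λ be real numbers with 0 < a < 1 and λ > 0. There exist a constant c with 0 < c < 1 and a threshold N > 0, both depending only on a and λ, such that: for every sequence (n_k)_{k ≥ 0} of positive reals with n_0 ≥ N and n_{k+1} ≥ n_k + λ · n_k^a for all k, one has n_k ≥ c · (n_0^{1−a} + k)^{1/(1−a)} for all k ≥ 0. -/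
open Real

theorem stmt5 (a lam : ℝ) (ha0 : 0 < a) (ha1 : a < 1) (hlam : 0 < lam) :
    ∃ c N : ℝ, 0 < c ∧ c < 1 ∧ 0 < N ∧
      ∀ n : ℕ → ℝ, (∀ k, 0 < n k) → N ≤ n 0 →
        (∀ k, n k + lam * n k ^ a ≤ n (k + 1)) →
        ∀ k : ℕ, c * (n 0 ^ (1 - a) + k) ^ (1 / (1 - a)) ≤ n k := by
  set p : ℝ := 1 - a with hpdef
  have hp : 0 < p := by simp [hpdef]; linarith
  have hp1 : p ≤ 1 := by simp [hpdef]; linarith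
  set δ : ℝ := p * lam * 2 ^ (p - 1) with hδdef
  have hδ : 0 < δ := by positivity
  set d : ℝ := min δ (1/2) with hddef
  have hd0 : 0 < d := lt_min hδ (by norm_num)
  have hd1 : d ≤ 1 := le_trans (min_le_right _ _) (by norm_num)
  refine ⟨d ^ (1/p), max (lam ^ (1/p)) 1, by positivity, ?_, ?_, ?_⟩
  · exact Real.rpow_lt_one hd0.le (lt_of_le_of_lt (min_le_right _ _) (by norm_num))
      (by positivity)
  · exact lt_of_lt_of_le one_pos (le_max_right _ _)
  intro n hn hN hstep
  -- sequence stays above N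
  have hmono : ∀ k, max (lam ^ (1/p)) 1 ≤ n k := by
    intro k
    induction k with
    | zero => exact hN
    | succ k ih =>
      have := hstep k
      have h2 : 0 < lam * n k ^ a := mul_pos hlam (Real.rpow_pos_of_pos (hn k) a)
      linarith
  -- key induction
  have key : ∀ k : ℕ, n 0 ^ p + δ * k ≤ n k ^ p := by
    intro k
    induction k with
    | zero => simp
    | succ k ih =>
      set m := n k with hmdef
      have hm0 : 0 < m := hn k
      have hm1 : 1 ≤ m := le_trans (le_max_right _ _) (hmono k)
      have hmlam : lam ≤ m ^ p := by
        calc lam = (lam ^ (1/p)) ^ p := by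
              rw [← Real.rpow_mul hlam.le, one_div, inv_mul_cancel₀ hp.ne', Real.rpow_one]
          _ ≤ m ^ p := Real.rpow_le_rpow (by positivity)
              (le_trans (le_max_left _ _) (hmono k)) hp.le
      have hla : lam * m ^ a ≤ m := by
        calc lam * m ^ a ≤ m ^ p * m ^ a :=
              mul_le_mul_of_nonneg_right hmlam (by positivity)
          _ = m := by rw [← Real.rpow_add hm0]; simp [hpdef]
      set M : ℝ := m + lam * m ^ a with hMdef
      have hM0 : 0 < M := by positivity
      have hmM : m ≤ M := by nlinarith [Real.rpow_pos_of_pos hm0 a]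
      have hM2 : M ≤ 2 * m := by linarith
      -- Bernoulli: m^p ≤ M^p - p * (lam*m^a) * M^(p-1)
      have hs : -1 ≤ -(lam * m ^ a / M) := by
        rw [neg_le_neg_iff, div_le_one hM0]; linarith
      have hber := rpow_one_add_le_one_add_mul_self hs hp.le hp1
      have h1s : 1 + -(lam * m ^ a / M) = m / M := by
        field_simp
        simp only [hMdef]; ring
      rw [h1s] at hber
      have hMp : 0 < M ^ p := Real.rpow_pos_of_pos hM0 p
      have hkey : m ^ p ≤ M ^ p - p * (lam * m ^ a) * M ^ (p - 1) := by
        have := mul_le_mul_of_nonneg_left hber hMp.le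
        rw [Real.div_rpow hm0.le hM0.le] at this
        have hmp' : M ^ p * (m ^ p / M ^ p) = m ^ p := by field_simp
        rw [hmp'] at this
        have hRHS : M ^ p * (1 + p * -(lam * m ^ a / M))
            = M ^ p - p * (lam * m ^ a) * M ^ (p - 1) := by
          have : M ^ (p - 1) = M ^ p / M := by
            rw [Real.rpow_sub hM0, Real.rpow_one]
          rw [this]; field_simp; ring
        linarith [hRHS ▸ this]
      -- lower bound on the correction term
      have hcorr : δ ≤ p * (lam * m ^ a) * M ^ (p - 1) := by
        have h2m : (2 * m) ^ (p - 1) ≤ M ^ (p - 1) :=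
          Real.rpow_le_rpow_of_nonpos hM0 hM2 (by linarith)
        have hcalc : m ^ a * (2 * m) ^ (p - 1) = 2 ^ (p - 1) := by
          rw [Real.mul_rpow (by norm_num) hm0.le,
            show m ^ a * (2 ^ (p-1) * m ^ (p-1)) = 2 ^ (p-1) * (m ^ a * m ^ (p-1)) from by ring,
            ← Real.rpow_add hm0]
          simp [hpdef]
        calc δ = p * lam * (m ^ a * (2 * m) ^ (p - 1)) := by rw [hcalc]
          _ ≤ p * lam * (m ^ a * M ^ (p - 1)) := by
              apply mul_le_mul_of_nonneg_left _ (by positivity)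
              exact mul_le_mul_of_nonneg_left h2m (by positivity)
          _ = p * (lam * m ^ a) * M ^ (p - 1) := by ring
      have hnext : M ^ p ≤ n (k + 1) ^ p :=
        Real.rpow_le_rpow hM0.le (hstep k) hp.le
      push_cast
      nlinarith
  -- conclude
  intro k
  have hk : n 0 ^ p + δ * k ≤ n k ^ p := key k
  have hn0 : 0 < n 0 := hn 0
  have hbase : d * (n 0 ^ p + k) ≤ n 0 ^ p + δ * k := by
    have h1 : d * (n 0 ^ p) ≤ n 0 ^ p := by
      nlinarith [Real.rpow_pos_of_pos hn0 p]
    have h2 : d * k ≤ δ * k := by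
      have : d ≤ δ := min_le_left _ _
      exact mul_le_mul_of_nonneg_right this (Nat.cast_nonneg k)
    nlinarith
  have hX : (0:ℝ) ≤ n 0 ^ p + k := by positivity
  have hfin : (d * (n 0 ^ p + k)) ^ (1/p) ≤ (n k ^ p) ^ (1/p) :=
    Real.rpow_le_rpow (by positivity) (le_trans hbase hk) (by positivity)
  have heq1 : (d * (n 0 ^ p + k)) ^ (1/p) = d ^ (1/p) * (n 0 ^ p + k) ^ (1/p) :=
    Real.mul_rpow hd0.le hX
  have heq2 : (n k ^ p) ^ (1/p) = n k := by
    rw [← Real.rpow_mul (hn k).le, mul_one_div, div_self hp.ne', Real.rpow_one]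
  rw [heq1, heq2] at hfin
  exact hfin
end

section
/- Let n be a positive integer and let G be the n × n × n three-dimensional grid graph, whose vertices are triples in {1, …, n}³ with two triples adjacent exactly when they agree in two coordinates and differ by exactly 1 in the remaining coordinate. Then every vertex set P with |P| ≤ n − 1 satisfies |N_G(P)| ≥ |P|^{2/3}; equivalently, |N_G(P)|³ ≥ |P|². -/
open SimpleGraph

/-- The `n × n × n` three-dimensional grid graph: the box product of three paths on
`n` vertices. -/
def gridGraph3 (n : ℕ) : SimpleGraph (Fin n × Fin n × Fin n) :=
  (pathGraph n) □ ((pathGraph n) □ (pathGraph n))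

/-
For each coordinate plane, every line of the grid orthogonal to it that meets `P` cannot lie
inside `P` (it has `n > |P|` points), so, being connected, it contains a point of `N(P)`. Hence
each of the three coordinate projections of `P` has at most `|N(P)|` points, and the
Loomis–Whitney inequality `|P|² ≤ |π₁₂ P| |π₁₃ P| |π₂₃ P|` gives `|P|² ≤ |N(P)|³`.
-/

open Finset

theorem Finset.card_filter_fst_eq_snd_eq_sum_sq {ι κ : Type*} [DecidableEq κ] (s : Finset ι)
    (f : ι → κ) :
    #((s ×ˢ s).filter fun w => f w.1 = f w.2) = ∑ k ∈ s.image f, #(s.filter (f · = k)) ^ 2 := by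
  rw [card_eq_sum_card_fiberwise (f := fun w => f w.1) (t := s.image f) fun w hw =>
    mem_image_of_mem f (mem_product.1 (mem_filter.1 hw).1).1]
  refine sum_congr rfl fun k _ => ?_
  rw [sq, ← card_product]
  congr 1
  ext w
  simp only [mem_filter, mem_product]
  grind

theorem Finset.card_sq_le_card_image_mul_card_image_mul_card_image {α β γ : Type*}
    [DecidableEq α] [DecidableEq β] [DecidableEq γ] (A : Finset (α × β × γ)) :
    #A ^ 2 ≤ #(A.image fun p => (p.1, p.2.1)) *
      (#(A.image fun p => (p.1, p.2.2)) * #(A.image Prod.snd)) := by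
  set π₁₂ : α × β × γ → α × β := fun p => (p.1, p.2.1)
  set T := (A ×ˢ A).filter fun w => π₁₂ w.1 = π₁₂ w.2
  -- A pair of points over the same point of the `(1,2)`-plane is determined by the
  -- `(1,3)`-projection of the first point and the `(2,3)`-projection of the second.
  have hT : #T ≤ #(A.image fun p => (p.1, p.2.2)) * #(A.image Prod.snd) := by
    rw [← card_product]
    refine card_le_card_of_injOn (fun w => ((w.1.1, w.1.2.2), w.2.2)) (fun w hw => ?_) ?_
    · obtain ⟨hw, -⟩ := mem_filter.1 hw
      rw [mem_product] at hw
      exact mem_product.2 ⟨mem_image_of_mem _ hw.1, mem_image_of_mem _ hw.2⟩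
    · intro w hw w' hw' h
      grind
  calc #A ^ 2 = (∑ q ∈ A.image π₁₂, #(A.filter (π₁₂ · = q))) ^ 2 := by
        rw [← card_eq_sum_card_image]
    _ ≤ #(A.image π₁₂) * ∑ q ∈ A.image π₁₂, #(A.filter (π₁₂ · = q)) ^ 2 :=
        sq_sum_le_card_mul_sum_sq
    _ = #(A.image π₁₂) * #T := by rw [card_filter_fst_eq_snd_eq_sum_sq]
    _ ≤ _ := by gcongr

theorem exists_mem_extNeighborSet_of_hom {U V : Type*} {H : SimpleGraph U} {G : SimpleGraph V}
    (hH : H.Preconnected) (f : H →g G) {S : Set V} {u v : U} (hu : f u ∈ S) (hv : f v ∉ S) :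
    ∃ w, f w ∈ extNeighborSet G S := by
  obtain ⟨p⟩ := hH u v
  obtain ⟨d, -, hd₁, hd₂⟩ := p.exists_boundary_dart (f ⁻¹' S) hu hv
  exact ⟨d.snd, hd₂, f d.fst, hd₁, f.map_adj d.adj⟩

theorem exists_mem_extNeighborSet_of_embedding {U V : Type*} [Finite U] [Finite V]
    {H : SimpleGraph U} {G : SimpleGraph V} (hH : H.Preconnected) (f : H ↪g G) {S : Set V}
    (hS : S.ncard < Nat.card U) {u : U} (hu : f u ∈ S) :
    ∃ w, f w ∈ extNeighborSet G S := by
  obtain ⟨v, hv⟩ : ∃ v, f v ∉ S := by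
    by_contra! h
    have := Set.ncard_le_ncard (Set.range_subset_iff.2 h)
    rw [Set.ncard_range_of_injective f.injective] at this
    omega
  exact exists_mem_extNeighborSet_of_hom hH f.toHom hu hv

theorem ncard_image_le_ncard_extNeighborSet {U V W : Type*} [Finite U] [Finite V]
    {H : SimpleGraph U} {G : SimpleGraph V} (hH : H.Preconnected) {S : Set V}
    (hS : S.ncard < Nat.card U) (π : V → W)
    (hline : ∀ v ∈ S, ∃ L : H ↪g G, v ∈ Set.range L ∧ ∀ x, π (L x) = π v) :
    (π '' S).ncard ≤ (extNeighborSet G S).ncard := by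
  refine (Set.ncard_le_ncard (t := π '' extNeighborSet G S) ?_).trans Set.ncard_image_le
  rintro _ ⟨v, hv, rfl⟩
  obtain ⟨L, ⟨x, rfl⟩, hπ⟩ := hline v hv
  obtain ⟨w, hw⟩ := exists_mem_extNeighborSet_of_embedding hH L hS hv
  exact ⟨L w, hw, hπ w⟩

theorem stmt6 (n : ℕ) (hn : 0 < n) (P : Set (Fin n × Fin n × Fin n))
    (hP : P.ncard ≤ n - 1) :
    P.ncard ^ 2 ≤ (extNeighborSet (gridGraph3 n) P).ncard ^ 3 := by
  classical
  set N := extNeighborSet (gridGraph3 n) P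
  have hPn : P.ncard < Nat.card (Fin n) := by rw [Nat.card_fin]; omega
  have h₁₂ : ((fun p => (p.1, p.2.1)) '' P).ncard ≤ N.ncard :=
    ncard_image_le_ncard_extNeighborSet (pathGraph_preconnected n) hPn _ fun v _ =>
      ⟨(boxProdRight _ _ v.1).comp (boxProdRight _ _ v.2.1), ⟨v.2.2, rfl⟩, fun _ => rfl⟩
  have h₁₃ : ((fun p => (p.1, p.2.2)) '' P).ncard ≤ N.ncard :=
    ncard_image_le_ncard_extNeighborSet (pathGraph_preconnected n) hPn _ fun v _ =>
      ⟨(boxProdRight _ _ v.1).comp (boxProdLeft _ _ v.2.2), ⟨v.2.1, rfl⟩, fun _ => rfl⟩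
  have h₂₃ : (Prod.snd '' P).ncard ≤ N.ncard :=
    ncard_image_le_ncard_extNeighborSet (pathGraph_preconnected n) hPn _ fun v _ =>
      ⟨boxProdLeft _ _ v.2, ⟨v.1, rfl⟩, fun _ => rfl⟩
  have hLW := P.toFinset.card_sq_le_card_image_mul_card_image_mul_card_image
  simp only [← Set.toFinset_image, ← Set.ncard_eq_toFinset_card'] at hLW
  calc P.ncard ^ 2 ≤ _ := hLW
    _ ≤ N.ncard * (N.ncard * N.ncard) := by gcongr
    _ = N.ncard ^ 3 := by ring
end

section
/- Let c and p be natural numbers and let G be a finite connected simple graph with cutwidth at most c and diameter at most p. Then |V(G)| ≤ (2p+1)^c. -/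
open SimpleGraph

/-- `G` has cutwidth at most `c`: there is an enumeration of the vertices such that every
prefix of the enumeration is crossed by at most `c` edges. -/
def CutwidthLE {V : Type*} [Fintype V] (G : SimpleGraph V) (c : ℕ) : Prop :=
  ∃ e : V ≃ Fin (Fintype.card V),
    ∀ i : ℕ, i + 1 < Fintype.card V →
      {p : V × V | G.Adj p.1 p.2 ∧ (e p.1 : ℕ) ≤ i ∧ i < (e p.2 : ℕ)}.ncard ≤ c

/-!
Order the vertices by the cutwidth enumeration, so that cut `i` separates positions `≤ i` from
positions `> i`, and call an edge spanning for a window `[α, β)` of cuts if it crosses all of them.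
A window with `s` spanning edges has at most `(2p+1)^m` cuts once `c ≤ m + s`, by induction on
`m`. Every vertex of the window is joined to the vertex at position `α` by a walk of length
`≤ p`; stopped at its first spanning edge, it becomes a walk avoiding spanning edges to a vertex
outside the window, on its left or on its right. An edge of such a walk crosses a subwindow
which has gained that edge as a spanning edge, so by induction it crosses at most
`(2p+1)^(m-1)` cuts of the window. Where the side from which the vertices are reached switches
from left to right, a left walk and a right walk together cover all cuts but one, whence at most
`2p(2p+1)^(m-1) + 1` cuts. For the whole graph, a shortest walk from the first to the last vertex
crosses all `n - 1` cuts, each of its edges at most `(2p+1)^(c-1)` of them.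
-/

theorem Nat.exists_consecutive_of_forall_or {P Q : ℕ → Prop} {a b : ℕ} (hab : a < b)
    (ha : P a) (hb : Q b) (h : ∀ t, a ≤ t → t ≤ b → P t ∨ Q t) :
    ∃ t, a ≤ t ∧ t < b ∧ P t ∧ Q (t + 1) := by
  induction b, hab using Nat.le_induction with
  | base => exact ⟨a, le_rfl, lt_add_one a, ha, hb⟩
  | succ b hab ih =>
    rcases h b (by omega) (by omega) with hPb | hQb
    · exact ⟨b, by omega, lt_add_one b, hPb, hb⟩
    · obtain ⟨t, hat, htb, hPt, hQt⟩ := ih hQb fun t h₁ h₂ => h t h₁ (by omega)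
      exact ⟨t, hat, by omega, hPt, hQt⟩

namespace SimpleGraph

variable {V : Type*} (G : SimpleGraph V) (pos : V → ℕ)

/-- With `pos` a vertex enumeration, `spanningPairs pos i (i + 1)` are the edges across cut `i`. -/
def spanningPairs (α β : ℕ) : Set (V × V) :=
  {q | G.Adj q.1 q.2 ∧ pos q.1 ≤ α ∧ β ≤ pos q.2}

variable {G pos}

theorem spanningPairs_mono {α α' β β' : ℕ} (hα : α ≤ α') (hβ : β' ≤ β) :
    G.spanningPairs pos α β ⊆ G.spanningPairs pos α' β' :=
  fun _ ⟨hadj, h1, h2⟩ => ⟨hadj, h1.trans hα, hβ.trans h2⟩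

def Walk.AvoidsSpanning (pos : V → ℕ) (α β : ℕ) {u v : V} (w : G.Walk u v) : Prop :=
  ∀ x y, s(x, y) ∈ w.edges → (x, y) ∉ G.spanningPairs pos α β

theorem Walk.AvoidsSpanning.reverse {α β : ℕ} {u v : V} {w : G.Walk u v}
    (hw : w.AvoidsSpanning pos α β) : w.reverse.AvoidsSpanning pos α β := by
  intro x y hxy
  exact hw x y (by simpa [Walk.edges_reverse] using hxy)

theorem Walk.exists_avoidsSpanning_of_outside {α β : ℕ} {u z : V} (w : G.Walk u z)
    (hz : pos z ≤ α ∨ β ≤ pos z) :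
    ∃ (z' : V) (w' : G.Walk u z'), w'.length ≤ w.length ∧ w'.AvoidsSpanning pos α β ∧
      (pos z' ≤ α ∨ β ≤ pos z') := by
  induction w with
  | nil => exact ⟨_, Walk.nil, le_rfl, by simp [Walk.AvoidsSpanning], hz⟩
  | @cons u y z hadj rest ih =>
    obtain ⟨z', w', hlen, hw', hz'⟩ := ih hz
    by_cases hs : (u, y) ∈ G.spanningPairs pos α β ∨ (y, u) ∈ G.spanningPairs pos α β
    · refine ⟨u, Walk.nil, Nat.zero_le _, by simp [Walk.AvoidsSpanning], ?_⟩
      rcases hs with ⟨-, hu, -⟩ | ⟨-, -, hu⟩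
      exacts [Or.inl hu, Or.inr hu]
    · refine ⟨z', Walk.cons hadj w', by simpa using hlen, ?_, hz'⟩
      intro x x' hx
      rw [Walk.edges_cons, List.mem_cons, Sym2.eq_iff] at hx
      rcases hx with (⟨rfl, rfl⟩ | ⟨rfl, rfl⟩) | hx
      exacts [fun h => hs (Or.inl h), fun h => hs (Or.inr h), hw' x x' hx]

theorem Walk.card_inter_Ico_le_length_mul {α β X : ℕ} {u v : V} (w : G.Walk u v)
    (hX : ∀ d ∈ w.darts, (Finset.Ico α β ∩ Finset.Ico (pos d.fst) (pos d.snd)).card ≤ X) :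
    (Finset.Ico α β ∩ Finset.Ico (pos u) (pos v)).card ≤ w.length * X := by
  induction w with
  | nil => simp
  | @cons u y v hadj rest ih =>
    have hsplit : Finset.Ico α β ∩ Finset.Ico (pos u) (pos v) ⊆
        (Finset.Ico α β ∩ Finset.Ico (pos u) (pos y)) ∪
          (Finset.Ico α β ∩ Finset.Ico (pos y) (pos v)) := by
      intro i
      simp only [Finset.mem_union, Finset.mem_inter, Finset.mem_Ico]
      omega
    have hfirst := hX ⟨(u, y), hadj⟩ (by simp)
    have hrest := ih fun d hd => hX d (by simp [hd])
    calc _ ≤ _ := Finset.card_le_card hsplit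
      _ ≤ _ := Finset.card_union_le _ _
      _ ≤ X + rest.length * X := Nat.add_le_add hfirst hrest
      _ = (rest.cons hadj).length * X := by rw [Walk.length_cons]; ring

variable [Finite V]

theorem card_inter_Ico_le_of_lt_ncard {α β k X : ℕ} {a b : V}
    (hX : ∀ α' β', α ≤ α' → β' ≤ β → k < (G.spanningPairs pos α' β').ncard → β' - α' ≤ X)
    (hab : G.Adj a b) (hk : k < (insert (a, b) (G.spanningPairs pos α β)).ncard) :
    (Finset.Ico α β ∩ Finset.Ico (pos a) (pos b)).card ≤ X := by
  rw [Finset.Ico_inter_Ico, Nat.card_Ico]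
  refine hX _ _ (le_max_left _ _) (min_le_left _ _) (hk.trans_le (Set.ncard_le_ncard ?_))
  exact Set.insert_subset ⟨hab, le_max_right _ _, min_le_right _ _⟩
    (spanningPairs_mono (le_max_left _ _) (min_le_left _ _))

theorem Walk.AvoidsSpanning.card_inter_Ico_le {α β k X : ℕ} {u v : V} {w : G.Walk u v}
    (hw : w.AvoidsSpanning pos α β)
    (hX : ∀ α' β', α ≤ α' → β' ≤ β → k < (G.spanningPairs pos α' β').ncard → β' - α' ≤ X)
    (hk : k ≤ (G.spanningPairs pos α β).ncard) :
    (Finset.Ico α β ∩ Finset.Ico (pos u) (pos v)).card ≤ w.length * X := by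
  refine w.card_inter_Ico_le_length_mul fun d hd => card_inter_Ico_le_of_lt_ncard hX d.adj ?_
  rw [Set.ncard_insert_of_notMem (hw _ _ (w.edges_eq_map_darts ▸ List.mem_map_of_mem hd))]
  omega

theorem le_of_lt_ncard_spanningPairs {n c α β : ℕ}
    (hcw : ∀ i, i + 1 < n → (G.spanningPairs pos i (i + 1)).ncard ≤ c) (hβ : β < n)
    (h : c < (G.spanningPairs pos α β).ncard) : β ≤ α := by
  by_contra! hαβ
  have hsub := Set.ncard_le_ncard (spanningPairs_mono (G := G) (pos := pos) (α := α) le_rfl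
    (show α + 1 ≤ β by omega))
  have := hcw α (by omega)
  omega

theorem sub_le_two_mul_add_one {p α β k X : ℕ}
    (hp : ∀ u v : V, ∃ w : G.Walk u v, w.length ≤ p)
    (hsurj : ∀ t, α ≤ t → t ≤ β → ∃ v, pos v = t)
    (hX : ∀ α' β', α ≤ α' → β' ≤ β → k < (G.spanningPairs pos α' β').ncard → β' - α' ≤ X)
    (hk : k ≤ (G.spanningPairs pos α β).ncard) :
    β - α ≤ 2 * p * X + 1 := by
  rcases le_or_gt β α with hβα | hαβ
  · omega
  let Reach (S : Set ℕ) (t : ℕ) : Prop := ∃ (v z : V) (w : G.Walk v z),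
    pos v = t ∧ w.length ≤ p ∧ w.AvoidsSpanning pos α β ∧ pos z ∈ S
  have hnil {v : V} {t : ℕ} (S : Set ℕ) (hv : pos v = t) (ht : t ∈ S) : Reach S t :=
    ⟨v, v, Walk.nil, hv, by simp, by simp [Walk.AvoidsSpanning], hv ▸ ht⟩
  obtain ⟨v₀, hv₀⟩ := hsurj α le_rfl hαβ.le
  obtain ⟨v₁, hv₁⟩ := hsurj β hαβ.le le_rfl
  have hreach : ∀ t, α ≤ t → t ≤ β → Reach (Set.Iic α) t ∨ Reach (Set.Ici β) t := by
    intro t h₁ h₂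
    obtain ⟨v, rfl⟩ := hsurj t h₁ h₂
    obtain ⟨w, hw⟩ := hp v v₀
    obtain ⟨z, w', hlen, hw', hz⟩ :=
      w.exists_avoidsSpanning_of_outside (α := α) (β := β) (Or.inl hv₀.le)
    rcases hz with hz | hz
    exacts [Or.inl ⟨v, z, w', rfl, hlen.trans hw, hw', hz⟩,
      Or.inr ⟨v, z, w', rfl, hlen.trans hw, hw', hz⟩]
  obtain ⟨t, -, -, ⟨v, z, wL, rfl, hwL, hL, hz⟩, ⟨v', z', wR, hv', hwR, hR, hz'⟩⟩ :=
    Nat.exists_consecutive_of_forall_or hαβ (hnil _ hv₀ (Set.mem_Iic.2 le_rfl))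
      (hnil _ hv₁ (Set.mem_Ici.2 le_rfl)) hreach
  have hleft := hL.reverse.card_inter_Ico_le hX hk
  have hright := hR.card_inter_Ico_le hX hk
  rw [Finset.Ico_inter_Ico, Nat.card_Ico] at hleft hright
  rw [Walk.length_reverse] at hleft
  simp only [Set.mem_Iic, Set.mem_Ici] at hz hz'
  have hpL := Nat.mul_le_mul_right X hwL
  have hpR := Nat.mul_le_mul_right X hwR
  have h2p : 2 * p * X = p * X + p * X := by ring
  omega

theorem sub_le_pow {n c p α β : ℕ} (hp : ∀ u v : V, ∃ w : G.Walk u v, w.length ≤ p)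
    (hsurj : ∀ t < n, ∃ v, pos v = t)
    (hcw : ∀ i, i + 1 < n → (G.spanningPairs pos i (i + 1)).ncard ≤ c) (m : ℕ) (hβ : β < n)
    (hk : c - m ≤ (G.spanningPairs pos α β).ncard) : β - α ≤ (2 * p + 1) ^ m := by
  induction m generalizing α β with
  | zero =>
    have := sub_le_two_mul_add_one (α := α) (β := β) (k := c) (X := 0) hp
      (fun t _ ht => hsurj t (by omega))
      (fun α' β' _ hβ' h => by have := le_of_lt_ncard_spanningPairs hcw (by omega) h; omega)
      (by simpa using hk)
    simpa using this
  | succ m ih =>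
    calc β - α ≤ 2 * p * (2 * p + 1) ^ m + 1 :=
          sub_le_two_mul_add_one (α := α) (β := β) hp (fun t _ ht => hsurj t (by omega))
            (fun α' β' _ hβ' h => ih (by omega) (by omega)) hk
      _ ≤ (2 * p + 1) ^ (m + 1) := by
          rw [pow_succ]
          nlinarith [Nat.one_le_pow m (2 * p + 1) (by omega)]

theorem le_pow_of_ncard_spanningPairs_le {n c p : ℕ} (hinj : Function.Injective pos)
    (hp : ∀ u v : V, ∃ w : G.Walk u v, w.length ≤ p) (hsurj : ∀ t < n, ∃ v, pos v = t)
    (hcw : ∀ i, i + 1 < n → (G.spanningPairs pos i (i + 1)).ncard ≤ c) :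
    n ≤ (2 * p + 1) ^ c := by
  rcases Nat.lt_or_ge n 2 with hn | hn
  · have := Nat.one_le_pow c (2 * p + 1) (by omega)
    omega
  obtain ⟨u₀, hu₀⟩ := hsurj 0 (by omega)
  obtain ⟨u₁, hu₁⟩ := hsurj (n - 1) (by omega)
  obtain ⟨w, hw⟩ := hp u₀ u₁
  have hadj := w.adj_snd (Walk.not_nil_of_ne fun h => by subst h; omega)
  have hc : 1 ≤ c := by
    have hsnd : pos w.snd ≠ 0 := fun h => hadj.ne (hinj (h.trans hu₀.symm)).symm
    have : 0 < (G.spanningPairs pos 0 1).ncard := (Set.ncard_pos (Set.toFinite _)).2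
      ⟨(u₀, w.snd), hadj, hu₀.le, Nat.one_le_iff_ne_zero.2 hsnd⟩
    exact this.trans_le (hcw 0 (by omega))
  have hcover := w.card_inter_Ico_le_length_mul (pos := pos) (α := 0) (β := n - 1) fun d _ =>
    card_inter_Ico_le_of_lt_ncard (k := 0) (X := (2 * p + 1) ^ (c - 1))
      (fun α' β' _ hβ' h => sub_le_pow hp hsurj hcw (c - 1) (by omega) (by omega))
      d.adj ((Set.ncard_pos (Set.toFinite _)).2 (Set.insert_nonempty _ _))
  rw [hu₀, hu₁, Finset.inter_self, Nat.card_Ico] at hcover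
  have hlen := Nat.mul_le_mul_right ((2 * p + 1) ^ (c - 1)) hw
  calc n ≤ p * (2 * p + 1) ^ (c - 1) + 1 := by omega
    _ ≤ (2 * p + 1) ^ (c - 1) * (2 * p + 1) := by
        nlinarith [Nat.one_le_pow (c - 1) (2 * p + 1) (by omega)]
    _ = (2 * p + 1) ^ c := by rw [← pow_succ, Nat.sub_add_cancel hc]

end SimpleGraph

theorem stmt8 {V : Type*} [Fintype V] (G : SimpleGraph V) (c p : ℕ)
    (hconn : G.Connected) (hcw : CutwidthLE G c)
    (hdiam : ∀ u v : V, G.dist u v ≤ p) :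
    Fintype.card V ≤ (2 * p + 1) ^ c := by
  obtain ⟨e, hcw⟩ := hcw
  refine G.le_pow_of_ncard_spanningPairs_le (pos := fun v => e v)
    (fun a b h => e.injective (Fin.ext h)) (fun u v => ?_)
    (fun t ht => ⟨e.symm ⟨t, ht⟩, by simp⟩) hcw
  obtain ⟨w, hw⟩ := hconn.exists_walk_length_eq_dist u v
  exact ⟨w, hw ▸ hdiam u v⟩
end

section
/- Let d and t be positive integers and let G be a finite simple graph that contains K_t as a d-shallow minor. Then for every cubic graph H with vertex set {1, …, t}, G contains a (≤4d)-subdivision of H as a subgraph: there exist pairwise distinct vertices c_1, …, c_t of G and, for each edge {u, v} of H, a path P_{uv} in G from c_u to c_v with at most 4d+1 edges, such that any two distinct such paths share no vertices except possibly a common endpoint, and no internal vertex of any of these paths equals c_w for any w ∈ {1, …, t}. -/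
open SimpleGraph

/-- `G` contains `K_t` as a `d`-shallow minor: pairwise disjoint nonempty branch sets,
each inducing a connected subgraph of radius at most `d`, with an edge of `G` between
any two branch sets. -/
def HasCliqueShallowMinor {V : Type*} (G : SimpleGraph V) (t d : ℕ) : Prop :=
  ∃ B : Fin t → Set V,
    (∀ i, (B i).Nonempty) ∧
    (Pairwise fun i j => Disjoint (B i) (B j)) ∧
    (∀ i, (G.induce (B i)).Connected) ∧
    (∀ i, ∃ x : ↥(B i), ∀ y : ↥(B i), (G.induce (B i)).dist x y ≤ d) ∧
    (∀ i j, i ≠ j → ∃ a ∈ B i, ∃ b ∈ B j, G.Adj a b)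

/-!
Fix a centre in each branch set. A vertex `u` of `H` has three neighbours `v`, and for each
we pick a vertex of `B u` adjacent to `B v`. These three attachment vertices are pairwise within
distance `2d` in `G[B u]`, so a shortest path between two of them, together with a shortest path
from the third cut off where it first meets the former, is a tripod in `B u` with legs of
length at most `2d`. The path for an edge `uv` of `H` runs along the leg in `B u`, across the
edge to `B v`, and back along the leg in `B v`: length at most `4d + 1`. Disjointness of the
branch sets and of the legs of each tripod gives the required disjointness of the paths.
-/

namespace SimpleGraph.Walk

variable {V : Type*} {G : SimpleGraph V}

theorem IsPath.append_cons {u v w x : V} {p : G.Walk u v} {q : G.Walk w x}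
    (hp : p.IsPath) (hq : q.IsPath) (h : G.Adj v w) (hpq : p.support.Disjoint q.support) :
    (p.append (cons h q)).IsPath := by
  rw [isPath_def, support_append, support_cons, List.tail_cons, List.nodup_append']
  exact ⟨hp.support_nodup, hq.support_nodup, hpq⟩

theorem exists_prefix_first_mem {a b : V} (S : Set V) (W : G.Walk a b) (hb : b ∈ S) :
    ∃ m ∈ S, ∃ W' : G.Walk a m, W'.length ≤ W.length ∧
      ∀ y ∈ W'.support, y ∈ S → y = m := by
  induction W with
  | nil => exact ⟨_, hb, nil, le_rfl, by simp⟩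
  | @cons u v w huv p ih =>
    by_cases hu : u ∈ S
    · exact ⟨u, hu, nil, by simp, by simp⟩
    obtain ⟨m, hm, W', hlen, hfirst⟩ := ih hb
    refine ⟨m, hm, cons huv W', by simpa using hlen, ?_⟩
    rintro y (_ | ⟨_, hy⟩) hyS
    · exact absurd hyS hu
    · exact hfirst y hy hyS

end SimpleGraph.Walk

namespace SimpleGraph

variable {V ι : Type*} {G : SimpleGraph V} {H : SimpleGraph ι}

theorem Connected.exists_tripod (hG : G.Connected) {k : ℕ} {a₁ a₂ a₃ : V}
    (h₁₂ : G.dist a₁ a₂ ≤ k) (h₃₁ : G.dist a₃ a₁ ≤ k) :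
    ∃ m, ∃ (p₁ : G.Walk m a₁) (p₂ : G.Walk m a₂) (p₃ : G.Walk m a₃),
      (p₁.IsPath ∧ p₂.IsPath ∧ p₃.IsPath) ∧
      (p₁.length ≤ k ∧ p₂.length ≤ k ∧ p₃.length ≤ k) ∧
      (∀ y ∈ p₁.support, y ∈ p₂.support → y = m) ∧
      (∀ y ∈ p₁.support, y ∈ p₃.support → y = m) ∧
      (∀ y ∈ p₂.support, y ∈ p₃.support → y = m) := by
  classical
  obtain ⟨Q, hQ, hQlen⟩ := hG.exists_path_of_dist a₁ a₂
  obtain ⟨W, hWlen⟩ := hG.exists_walk_length_eq_dist a₃ a₁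
  obtain ⟨m, hm, R, hRlen, hRfirst⟩ :=
    W.exists_prefix_first_mem {y | y ∈ Q.support} Q.start_mem_support
  have hm : m ∈ Q.support := hm
  have hQm : ((Q.takeUntil m hm).append (Q.dropUntil m hm)).IsPath := by rwa [Q.take_spec hm]
  refine ⟨m, (Q.takeUntil m hm).reverse, Q.dropUntil m hm, R.bypass.reverse,
    ⟨(hQ.takeUntil hm).reverse, hQ.dropUntil hm, R.bypass_isPath.reverse⟩, ⟨?_, ?_, ?_⟩,
    ?_, ?_, ?_⟩
  · simpa using (Q.length_takeUntil_le_length hm).trans (hQlen ▸ h₁₂)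
  · exact (Q.length_dropUntil_le_length hm).trans (hQlen ▸ h₁₂)
  · simpa using (R.length_bypass_le_length.trans hRlen).trans (hWlen ▸ h₃₁)
  · intro y hy₁ hy₂
    by_contra hne
    exact hQm.ne_of_mem_support_of_append hne (by simpa using hy₁) hy₂ rfl
  · intro y hy₁ hy₃
    rw [Walk.support_reverse, List.mem_reverse] at hy₁ hy₃
    exact hRfirst y (R.support_bypass_subset_support hy₃)
      (Q.support_takeUntil_subset_support hm hy₁)
  · intro y hy₂ hy₃
    rw [Walk.support_reverse, List.mem_reverse] at hy₃
    exact hRfirst y (R.support_bypass_subset_support hy₃)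
      (Q.support_dropUntil_subset_support hm hy₂)

theorem Connected.exists_tripod_of_card_eq_three (hι : Nat.card ι = 3)
    (hG : G.Connected) {k : ℕ} (a : ι → V) (ha : ∀ i j, G.dist (a i) (a j) ≤ k) :
    ∃ m, ∃ p : ∀ i, G.Walk m (a i), (∀ i, (p i).IsPath) ∧ (∀ i, (p i).length ≤ k) ∧
      Pairwise fun i j => ∀ y ∈ (p i).support, y ∈ (p j).support → y = m := by
  have : Finite ι := Nat.finite_of_card_ne_zero (by omega)
  let e := Finite.equivFinOfCardEq hι
  obtain ⟨m, p₁, p₂, p₃, ⟨hp₁, hp₂, hp₃⟩, ⟨hl₁, hl₂, hl₃⟩, h₁₂, h₁₃, h₂₃⟩ :=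
    hG.exists_tripod (ha (e.symm 0) (e.symm 1)) (ha (e.symm 2) (e.symm 0))
  let q : ∀ j : Fin 3, G.Walk m (a (e.symm j)) :=
    Fin.cases p₁ (Fin.cases p₂ (Fin.cases p₃ finZeroElim))
  refine ⟨m, fun i => (q (e i)).copy rfl (by simp), fun i => ?_, fun i => ?_, fun i j hij => ?_⟩
  · simp only [Walk.isPath_copy]
    generalize e i = j
    fin_cases j <;> assumption
  · simp only [Walk.length_copy]
    generalize e i = j
    fin_cases j <;> assumption
  · simp only [Walk.support_copy]
    have he : e i ≠ e j := e.injective.ne hij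
    generalize e i = i' at he
    generalize e j = j' at he
    fin_cases i' <;> fin_cases j'
    all_goals first
      | exact absurd rfl he
      | assumption
      | exact fun y hy hy' => h₁₂ y hy' hy
      | exact fun y hy hy' => h₁₃ y hy' hy
      | exact fun y hy hy' => h₂₃ y hy' hy

theorem exists_tripod_of_induce_connected {s : Set V} (hs : (G.induce s).Connected) {d : ℕ}
    {x : s} (hx : ∀ y, (G.induce s).dist x y ≤ d) (hι : Nat.card ι = 3)
    (a : ι → V) (ha : ∀ i, a i ∈ s) :
    ∃ m ∈ s, ∃ p : ∀ i, G.Walk m (a i), (∀ i, (p i).IsPath) ∧ (∀ i, (p i).length ≤ 2 * d) ∧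
      (∀ i, ∀ y ∈ (p i).support, y ∈ s) ∧
      Pairwise fun i j => ∀ y ∈ (p i).support, y ∈ (p j).support → y = m := by
  have hdist (i j : ι) : (G.induce s).dist ⟨a i, ha i⟩ ⟨a j, ha j⟩ ≤ 2 * d :=
    calc _ ≤ (G.induce s).dist ⟨a i, ha i⟩ x + (G.induce s).dist x ⟨a j, ha j⟩ :=
          hs.dist_triangle
      _ ≤ d + d := add_le_add (dist_comm.trans_le (hx _)) (hx _)
      _ = 2 * d := (two_mul d).symm
  obtain ⟨m, p, hpath, hlen, hinter⟩ := hs.exists_tripod_of_card_eq_three hι _ hdist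
  let f : G.induce s →g G := (Embedding.induce s).toHom
  refine ⟨m, m.2, fun i => (p i).map f, fun i => (hpath i).map Subtype.val_injective,
    fun i => (Walk.length_map _ _).trans_le (hlen i), fun i y hy => ?_,
    fun i j hij y hy hy' => ?_⟩
  · obtain ⟨z, -, rfl⟩ := List.mem_map.mp ((p i).support_map f ▸ hy)
    exact z.2
  · obtain ⟨z, hz, rfl⟩ := List.mem_map.mp ((p i).support_map f ▸ hy)
    obtain ⟨z', hz', hzz'⟩ := List.mem_map.mp ((p j).support_map f ▸ hy')
    exact congrArg Subtype.val (hinter hij z hz (Subtype.val_injective hzz' ▸ hz'))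

theorem exists_attachment [LinearOrder ι] {B : ι → Set V}
    (hadj : ∀ u v, H.Adj u v → ∃ a ∈ B u, ∃ b ∈ B v, G.Adj a b) :
    ∃ A : ∀ ⦃u v⦄, H.Adj u v → V,
      ∀ ⦃u v⦄ (h : H.Adj u v), A h ∈ B u ∧ G.Adj (A h) (A h.symm) := by
  choose a ha b hb hab using hadj
  refine ⟨fun u v h => if u < v then a u v h else b v u h.symm, fun u v h => ?_⟩
  rcases lt_trichotomy u v with huv | rfl | hvu
  · simp [huv, huv.not_gt, ha, hab]
  · exact absurd rfl h.ne
  · simpa [hvu, hvu.not_gt, hb] using (hab v u h.symm).symm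

structure BranchSpiders (G : SimpleGraph V) (H : SimpleGraph ι) (B : ι → Set V) (ℓ : ℕ) where
  center : ι → V
  attach : ∀ ⦃u v⦄, H.Adj u v → V
  leg : ∀ ⦃u v⦄ (h : H.Adj u v), G.Walk (center u) (attach h)
  center_mem : ∀ u, center u ∈ B u
  adj_attach : ∀ ⦃u v⦄ (h : H.Adj u v), G.Adj (attach h) (attach h.symm)
  isPath_leg : ∀ ⦃u v⦄ (h : H.Adj u v), (leg h).IsPath
  length_leg_le : ∀ ⦃u v⦄ (h : H.Adj u v), (leg h).length ≤ ℓ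
  mem_of_mem_support_leg : ∀ ⦃u v⦄ (h : H.Adj u v), ∀ y ∈ (leg h).support, y ∈ B u
  eq_center_of_mem_support_leg : ∀ ⦃u v w⦄ (h : H.Adj u v) (h' : H.Adj u w), v ≠ w →
    ∀ y ∈ (leg h).support, y ∈ (leg h').support → y = center u

theorem exists_branchSpiders [LinearOrder ι] {B : ι → Set V} {d : ℕ}
    (hconn : ∀ u, (G.induce (B u)).Connected)
    (hrad : ∀ u, ∃ x : B u, ∀ y : B u, (G.induce (B u)).dist x y ≤ d)
    (hadj : ∀ u v, H.Adj u v → ∃ a ∈ B u, ∃ b ∈ B v, G.Adj a b)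
    (hdeg : ∀ u, (H.neighborSet u).ncard = 3) :
    Nonempty (BranchSpiders G H B (2 * d)) := by
  obtain ⟨A, hA⟩ := exists_attachment hadj
  choose x hx using hrad
  choose c hc leg hpath hlen hmem hinter using fun u =>
    exists_tripod_of_induce_connected (hconn u) (hx u) (ι := H.neighborSet u) (hdeg u)
      (fun v => A v.2) (fun v => (hA v.2).1)
  exact ⟨{
    center := c
    attach := A
    leg := fun u v h => leg u ⟨v, h⟩
    center_mem := hc
    adj_attach := fun _ _ h => (hA h).2
    isPath_leg := fun u v h => hpath u ⟨v, h⟩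
    length_leg_le := fun u v h => hlen u ⟨v, h⟩
    mem_of_mem_support_leg := fun u v h => hmem u ⟨v, h⟩
    eq_center_of_mem_support_leg := fun u _ _ _ _ hvw =>
      hinter u fun he => hvw (congrArg Subtype.val he) }⟩

namespace BranchSpiders

variable {B : ι → Set V} {ℓ : ℕ} (S : BranchSpiders G H B ℓ)

def path ⦃u v : ι⦄ (h : H.Adj u v) : G.Walk (S.center u) (S.center v) :=
  (S.leg h).append (.cons (S.adj_attach h) (S.leg h.symm).reverse)

theorem mem_support_path {u v : ι} (h : H.Adj u v) {y : V} :
    y ∈ (S.path h).support ↔ y ∈ (S.leg h).support ∨ y ∈ (S.leg h.symm).support := by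
  rw [path, Walk.mem_support_append_iff, Walk.support_cons, List.mem_cons, Walk.support_reverse,
    List.mem_reverse]
  constructor
  · rintro (hy | rfl | hy)
    exacts [Or.inl hy, Or.inl (S.leg h).end_mem_support, Or.inr hy]
  · rintro (hy | hy)
    exacts [Or.inl hy, Or.inr (Or.inr hy)]

theorem length_path_le {u v : ι} (h : H.Adj u v) : (S.path h).length ≤ 2 * ℓ + 1 := by
  have := S.length_leg_le h
  have := S.length_leg_le h.symm
  simp only [path, Walk.length_append, Walk.length_cons, Walk.length_reverse]
  omega

variable (hB : Pairwise fun i j => Disjoint (B i) (B j))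
include hB

theorem center_injective : Function.Injective S.center := fun u w huw =>
  hB.eq (Set.not_disjoint_iff.2 ⟨_, S.center_mem u, huw ▸ S.center_mem w⟩)

theorem isPath_path {u v : ι} (h : H.Adj u v) : (S.path h).IsPath :=
  (S.isPath_leg h).append_cons (S.isPath_leg h.symm).reverse (S.adj_attach h) fun y hy hy' =>
    h.ne <| hB.eq <| Set.not_disjoint_iff.2 ⟨y, S.mem_of_mem_support_leg h y hy,
      S.mem_of_mem_support_leg h.symm y (by simpa using hy')⟩

theorem eq_or_eq_of_center_mem_support_path {u v w : ι} (h : H.Adj u v)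
    (hw : S.center w ∈ (S.path h).support) : w = u ∨ w = v := by
  rcases (S.mem_support_path h).1 hw with hw | hw
  · exact Or.inl <| hB.eq <| Set.not_disjoint_iff.2
      ⟨_, S.center_mem w, S.mem_of_mem_support_leg h _ hw⟩
  · exact Or.inr <| hB.eq <| Set.not_disjoint_iff.2
      ⟨_, S.center_mem w, S.mem_of_mem_support_leg h.symm _ hw⟩

theorem eq_center_of_mem_support_leg_of_ne {u v u' v' : ι} (h : H.Adj u v) (h' : H.Adj u' v')
    (hne : (u, v) ≠ (u', v')) {y : V} (hy : y ∈ (S.leg h).support)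
    (hy' : y ∈ (S.leg h').support) : y = S.center u := by
  obtain rfl : u = u' := hB.eq <| Set.not_disjoint_iff.2
    ⟨y, S.mem_of_mem_support_leg h y hy, S.mem_of_mem_support_leg h' y hy'⟩
  exact S.eq_center_of_mem_support_leg h h' (fun hvv' => hne (by rw [hvv'])) y hy hy'

theorem eq_center_of_mem_support_path_of_ne {u v u' v' : ι} (h : H.Adj u v) (h' : H.Adj u' v')
    (hne : s(u, v) ≠ s(u', v')) {y : V} (hy : y ∈ (S.path h).support)
    (hy' : y ∈ (S.path h').support) : y = S.center u ∨ y = S.center v := by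
  have hleg {u v : ι} (h : H.Adj u v) (hy : y ∈ (S.path h).support) :
      ∃ a b, ∃ hab : H.Adj a b, s(a, b) = s(u, v) ∧ y ∈ (S.leg hab).support := by
    rcases (S.mem_support_path h).1 hy with hy | hy
    exacts [⟨u, v, h, rfl, hy⟩, ⟨v, u, h.symm, Sym2.eq_swap, hy⟩]
  obtain ⟨a, b, hab, he, hya⟩ := hleg h hy
  obtain ⟨a', b', hab', he', hya'⟩ := hleg h' hy'
  have hne' : (a, b) ≠ (a', b') := by
    rintro ⟨⟩
    exact hne (he.symm.trans he')
  have hy_eq := S.eq_center_of_mem_support_leg_of_ne hB hab hab' hne' hya hya'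
  rcases Sym2.eq_iff.1 he with ⟨rfl, -⟩ | ⟨rfl, -⟩
  exacts [Or.inl hy_eq, Or.inr hy_eq]

end BranchSpiders

end SimpleGraph

theorem stmt9_general {V : Type*} (G : SimpleGraph V) (d t : ℕ)
    (hminor : HasCliqueShallowMinor G t d)
    (H : SimpleGraph (Fin t)) (hcubic : ∀ v, (H.neighborSet v).ncard = 3) :
    ∃ c : Fin t → V, Function.Injective c ∧
      ∃ P : ∀ ⦃u v : Fin t⦄, H.Adj u v → G.Walk (c u) (c v),
        (∀ u v (h : H.Adj u v), (P h).IsPath) ∧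
        (∀ u v (h : H.Adj u v), (P h).length ≤ 4 * d + 1) ∧
        (∀ u v (h : H.Adj u v) (w : Fin t), c w ∈ (P h).support → w = u ∨ w = v) ∧
        (∀ u v u' v' (h : H.Adj u v) (h' : H.Adj u' v'), s(u, v) ≠ s(u', v') →
          ∀ x : V, x ∈ (P h).support → x ∈ (P h').support →
            (x = c u ∨ x = c v) ∧ (x = c u' ∨ x = c v')) := by
  obtain ⟨B, -, hdisj, hconn, hrad, hedge⟩ := hminor
  obtain ⟨S⟩ := exists_branchSpiders (H := H) hconn hrad (fun u v h => hedge u v h.ne) hcubic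
  refine ⟨S.center, S.center_injective hdisj, S.path, fun u v h => S.isPath_path hdisj h,
    fun u v h => (S.length_path_le h).trans (by omega),
    fun u v h w => S.eq_or_eq_of_center_mem_support_path hdisj h,
    fun u v u' v' h h' hne x hx hx' => ?_⟩
  exact ⟨S.eq_center_of_mem_support_path_of_ne hdisj h h' hne hx hx',
    S.eq_center_of_mem_support_path_of_ne hdisj h' h hne.symm hx' hx⟩

theorem stmt9 {V : Type*} [Fintype V] (G : SimpleGraph V) (d t : ℕ)
    (hd : 0 < d) (ht : 0 < t) (hminor : HasCliqueShallowMinor G t d)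
    (H : SimpleGraph (Fin t)) (hcubic : ∀ v, (H.neighborSet v).ncard = 3) :
    ∃ c : Fin t → V, Function.Injective c ∧
      ∃ P : ∀ ⦃u v : Fin t⦄, H.Adj u v → G.Walk (c u) (c v),
        (∀ u v (h : H.Adj u v), (P h).IsPath) ∧
        (∀ u v (h : H.Adj u v), (P h).length ≤ 4 * d + 1) ∧
        (∀ u v (h : H.Adj u v) (w : Fin t), c w ∈ (P h).support → w = u ∨ w = v) ∧
        (∀ u v u' v' (h : H.Adj u v) (h' : H.Adj u' v'), s(u, v) ≠ s(u', v') →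
          ∀ x : V, x ∈ (P h).support → x ∈ (P h').support →
            (x = c u ∨ x = c v) ∧ (x = c u' ∨ x = c v')) :=
  stmt9_general G d t hminor H hcubic
end

section
/- Let t and Δ be positive integers and let τ_min, τ_max, f : ℝ_{>0} → ℝ_{>0} be non-decreasing sub-homogeneous functions. Let G be a finite n-vertex simple graph with maximum degree at most Δ that is a (τ_min, τ_max, f)-expander, and let G' be a (≤t)-subdivision of G with n' vertices. Set c = Δt + 1. Then G' is a (c·τ_min, τ_max/c, f/(cΔ²))-expander: every S ⊆ V(G') with c·τ_min(n') ≤ |S| ≤ τ_max(n')/c satisfies |N_{G'}(S)| ≥ f(|S|)/(c·Δ²). -/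
open SimpleGraph

def IsExpander {V : Type*} [Fintype V] (G : SimpleGraph V)
    (tmin tmax f : ℝ → ℝ) : Prop :=
  ∀ U : Set V, tmin (Fintype.card V) ≤ (U.ncard : ℝ) →
    (U.ncard : ℝ) ≤ tmax (Fintype.card V) →
    f (U.ncard) ≤ ((extNeighborSet G U).ncard : ℝ)

def SubHomogeneous (g : ℝ → ℝ) : Prop :=
  ∀ x y : ℝ, 1 ≤ x → 0 < y → g (x * y) ≤ x * g y

def MonoOnPos (g : ℝ → ℝ) : Prop :=
  ∀ x y : ℝ, 0 < x → x ≤ y → g x ≤ g y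

def walkInternal {V' : Type*} (G' : SimpleGraph V') {a b : V'} (p : G'.Walk a b) :
    Set V' :=
  {x | x ∈ p.support ∧ x ≠ a ∧ x ≠ b}

def IsLeSubdivision {V V' : Type*} (G : SimpleGraph V) (G' : SimpleGraph V')
    (t : ℕ) : Prop :=
  ∃ (ι : V → V') (P : ∀ ⦃u v : V⦄, G.Adj u v → G'.Walk (ι u) (ι v)),
    Function.Injective ι ∧
    (∀ u v (h : G.Adj u v), (P h).IsPath ∧ (P h).length ≤ t + 1) ∧
    (∀ u v (h : G.Adj u v), ∀ x ∈ walkInternal G' (P h), x ∉ Set.range ι) ∧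
    (∀ u v u' v' (h : G.Adj u v) (h' : G.Adj u' v'), s(u, v) ≠ s(u', v') →
      ∀ x ∈ walkInternal G' (P h), x ∉ walkInternal G' (P h')) ∧
    (∀ x : V', x ∈ Set.range ι ∨ ∃ u, ∃ v, ∃ h : G.Adj u v, x ∈ walkInternal G' (P h)) ∧
    (∀ e : Sym2 V', e ∈ G'.edgeSet ↔ ∃ u, ∃ v, ∃ h : G.Adj u v, e ∈ (P h).edges)

lemma walk_boundary {V' : Type*} {G' : SimpleGraph V'} {S : Set V'} :
    ∀ {a b : V'} (q : G'.Walk a b), (∃ y ∈ q.support, y ∈ S) → b ∉ S →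
      ∃ z ∈ q.support, z ∈ extNeighborSet G' S := by
  intro a b q
  induction q with
  | nil =>
    rintro ⟨y, hy, hyS⟩ hb
    simp only [Walk.support_nil, List.mem_singleton] at hy
    subst hy; exact absurd hyS hb
  | @cons u v w h q ih =>
    rintro ⟨y, hy, hyS⟩ hb
    by_cases hq : ∃ y' ∈ q.support, y' ∈ S
    · obtain ⟨z, hz, hzN⟩ := ih hq hb
      exact ⟨z, by simp [Walk.support_cons, hz], hzN⟩
    · have hyu : y = u := by
        simp only [Walk.support_cons, List.mem_cons] at hy
        rcases hy with h' | h'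
        · exact h'
        · exact absurd ⟨y, h', hyS⟩ hq
      have hv : v ∉ S := fun hv => hq ⟨v, q.start_mem_support, hv⟩
      exact ⟨v, by simp [Walk.support_cons, q.start_mem_support],
        ⟨hv, ⟨u, hyu ▸ hyS, h⟩⟩⟩

lemma path_boundary {V' : Type*} {G' : SimpleGraph V'} {S : Set V'} {a b : V'}
    {p : G'.Walk a b} (hp : p.IsPath) {s : V'} (hs : s ∈ p.support) (hS : s ∈ S)
    (hb : b ∉ S) :
    ∃ z ∈ p.support, z ∈ extNeighborSet G' S ∧ (s = a ∨ z ≠ a) := by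
  classical
  obtain ⟨z, hz, hzN⟩ :=
    walk_boundary (p.dropUntil s hs) ⟨s, Walk.start_mem_support _, hS⟩ hb
  refine ⟨z, p.support_dropUntil_subset hs hz, hzN, ?_⟩
  by_cases hsa : s = a
  · exact Or.inl hsa
  · right
    rintro rfl
    have hspec := p.take_spec hs
    have hnd : p.support.Nodup := hp.support_nodup
    rw [← hspec, Walk.support_append] at hnd
    have hdisj := List.disjoint_of_nodup_append hnd
    have ha1 : z ∈ (p.takeUntil s hs).support := Walk.start_mem_support _
    rw [Walk.support_eq_cons] at hz
    rcases List.mem_cons.mp hz with h1 | h1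
    · exact hsa h1.symm
    · exact hdisj ha1 h1

lemma internal_ncard_le {V' : Type*} {G' : SimpleGraph V'} {a b : V'} {p : G'.Walk a b}
    (hp : p.IsPath) (hab : a ≠ b) {t : ℕ} (hl : p.length ≤ t + 1) :
    (walkInternal G' p).ncard ≤ t := by
  classical
  have hsub : walkInternal G' p ⊆ ↑(p.support.toFinset \ {a, b}) := by
    rintro x ⟨hx, hxa, hxb⟩
    simp [hxa, hxb, hx]
  have h1 := Set.ncard_le_ncard hsub (Set.toFinite _)
  rw [Set.ncard_coe_finset] at h1
  have hab' : ({a, b} : Finset V') ⊆ p.support.toFinset := by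
    intro x hx
    simp only [Finset.mem_insert, Finset.mem_singleton] at hx
    rcases hx with rfl | rfl
    · simp [p.start_mem_support]
    · simp [p.end_mem_support]
  have h2 : (p.support.toFinset \ {a, b}).card = p.support.toFinset.card - 2 := by
    rw [Finset.card_sdiff_of_subset hab']
    congr 1
    rw [Finset.card_insert_of_notMem (by simp [hab]), Finset.card_singleton]
  have h3 : p.support.toFinset.card = p.length + 1 := by
    rw [List.toFinset_card_of_nodup hp.support_nodup, Walk.length_support]
  omega

theorem stmt10 {V V' : Type*} [Fintype V] [Fintype V']
    (G : SimpleGraph V) (G' : SimpleGraph V') (t Δ : ℕ) (ht : 0 < t) (hΔ : 0 < Δ)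
    (tmin tmax f : ℝ → ℝ)
    (hpos : ∀ x : ℝ, 0 < x → 0 < tmin x ∧ 0 < tmax x ∧ 0 < f x)
    (hmono : MonoOnPos tmin ∧ MonoOnPos tmax ∧ MonoOnPos f)
    (hsub : SubHomogeneous tmin ∧ SubHomogeneous tmax ∧ SubHomogeneous f)
    (hdeg : ∀ v : V, (G.neighborSet v).ncard ≤ Δ)
    (hexp : IsExpander G tmin tmax f)
    (hsubdiv : IsLeSubdivision G G' t) :
    IsExpander G'
      (fun x => ((Δ * t + 1 : ℕ) : ℝ) * tmin x)
      (fun x => tmax x / ((Δ * t + 1 : ℕ) : ℝ))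
      (fun x => f x / (((Δ * t + 1 : ℕ) : ℝ) * (Δ : ℝ) ^ 2)) := by
  classical
  obtain ⟨hmin, hmax', hfmono⟩ := hmono
  obtain ⟨smin, smax, sf⟩ := hsub
  obtain ⟨ι, P, hι, hpath, hint, hdisjp, hcover, hedge⟩ := hsubdiv
  intro S hS1 hS2
  simp only [] at hS1 hS2 ⊢
  set c : ℕ := Δ * t + 1 with hc
  have hcpos : (0:ℝ) < (c:ℝ) := by positivity
  have hc1 : (1:ℝ) ≤ (c:ℝ) := by exact_mod_cast Nat.one_le_iff_ne_zero.mpr (by omega)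
  by_cases hV' : Fintype.card V' = 0
  · -- degenerate case
    have hVempty : Fintype.card V = 0 := by
      have := Fintype.card_le_of_injective ι hι; omega
    have hS0 : S.ncard = 0 := by
      have : IsEmpty V' := Fintype.card_eq_zero_iff.mp hV'
      simp [Set.eq_empty_of_isEmpty S]
    rw [hV', hS0] at hS1 hS2
    simp only [Nat.cast_zero] at hS1 hS2
    have h1 : tmin ((Fintype.card V : ℕ) : ℝ) ≤ (((∅:Set V).ncard : ℕ) : ℝ) := by
      rw [hVempty]
      simp only [Set.ncard_empty, Nat.cast_zero]
      nlinarith [hcpos, hS1]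
    have h2 : (((∅:Set V).ncard : ℕ) : ℝ) ≤ tmax ((Fintype.card V : ℕ) : ℝ) := by
      rw [hVempty]
      simp only [Set.ncard_empty, Nat.cast_zero]
      rcases div_nonneg_iff.mp hS2 with ⟨h, _⟩ | ⟨_, hb⟩
      · exact h
      · linarith [hcpos]
    have h3 := hexp ∅ h1 h2
    have h4 : extNeighborSet G (∅ : Set V) = ∅ := by
      ext x; simp [extNeighborSet]
    rw [h4] at h3
    simp only [Set.ncard_empty, Nat.cast_zero] at h3
    rw [hS0]
    simp only [Nat.cast_zero]
    have h5 : f 0 / ((c:ℝ) * (Δ:ℝ)^2) ≤ 0 :=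
      div_nonpos_of_nonpos_of_nonneg h3 (by positivity)
    exact le_trans h5 (Nat.cast_nonneg _)
  · -- main case
    have hn'pos : 0 < Fintype.card V' := Nat.pos_of_ne_zero hV'
    haveI hV'ne : Nonempty V' := Fintype.card_pos_iff.mp hn'pos
    have hnpos : 0 < Fintype.card V := by
      by_contra h
      have hE : IsEmpty V := Fintype.card_eq_zero_iff.mp (by omega)
      obtain ⟨x⟩ := hV'ne
      rcases hcover x with ⟨u, _⟩ | ⟨u, v, h', _⟩ <;> exact hE.elim u
    have hn'R : (0:ℝ) < ((Fintype.card V' : ℕ) : ℝ) := by exact_mod_cast hn'pos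
    have hnR : (0:ℝ) < ((Fintype.card V : ℕ) : ℝ) := by exact_mod_cast hnpos
    have hminpos : 0 < tmin ((Fintype.card V' : ℕ) : ℝ) := (hpos _ hn'R).1
    have hSpos : (0:ℝ) < (S.ncard : ℝ) :=
      lt_of_lt_of_le (by positivity) hS1
    have hSne : S.Nonempty := by
      rw [← Set.ncard_pos (Set.toFinite S)]
      exact_mod_cast hSpos
    -- the projection φ : V' → V
    have htot : ∀ x : V', ∃ u : V,
        ι u = x ∨ ∃ v, ∃ h : G.Adj u v, x ∈ walkInternal G' (P h) := by
      intro x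
      rcases hcover x with ⟨u, rfl⟩ | ⟨u, v, h, hx⟩
      · exact ⟨u, Or.inl rfl⟩
      · exact ⟨u, Or.inr ⟨v, h, hx⟩⟩
    choose φ hφ using htot
    have hφι : ∀ u : V, φ (ι u) = u := by
      intro u
      rcases hφ (ι u) with h | ⟨v, h, hx⟩
      · exact hι h
      · exact absurd (Set.mem_range_self u) (hint _ _ h _ hx)
    set U : Set V := φ '' S with hU
    -- fibers of φ are small
    have hfiber : ∀ (u : V) (F : Finset V'),
        (∀ x ∈ F, ι u = x ∨ ∃ v, ∃ h : G.Adj u v, x ∈ walkInternal G' (P h)) →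
        F.card ≤ c := by
      intro u F hF
      set NB : Finset V := (Set.toFinite (G.neighborSet u)).toFinset with hNB
      have hNBcard : NB.card ≤ Δ := by
        have := hdeg u
        rwa [Set.ncard_eq_toFinset_card _ (Set.toFinite _)] at this
      set T : Finset V' := insert (ι u)
        (NB.biUnion fun v =>
          if h : G.Adj u v then (Set.toFinite (walkInternal G' (P h))).toFinset
          else ∅) with hT
      have hFT : F ⊆ T := by
        intro x hx
        rcases hF x hx with h | ⟨v, h, hxint⟩
        · rw [← h]; exact Finset.mem_insert_self _ _
        · refine Finset.mem_insert_of_mem (Finset.mem_biUnion.mpr ⟨v, ?_, ?_⟩)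
          · exact (Set.Finite.mem_toFinset _).mpr h
          · rw [dif_pos h]; exact (Set.Finite.mem_toFinset _).mpr hxint
      have hb : (NB.biUnion fun v =>
          if h : G.Adj u v then (Set.toFinite (walkInternal G' (P h))).toFinset
          else ∅).card ≤ Δ * t := by
        refine le_trans Finset.card_biUnion_le ?_
        refine le_trans (Finset.sum_le_card_nsmul NB _ t ?_) ?_
        · intro v hv
          by_cases h : G.Adj u v
          · rw [dif_pos h]
            have h1 := internal_ncard_le (hpath u v h).1
              (fun e => (G.ne_of_adj h) (hι e)) (hpath u v h).2
            rwa [Set.ncard_eq_toFinset_card _ (Set.toFinite _)] at h1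
          · simp [dif_neg h]
        · simp only [smul_eq_mul]
          exact Nat.mul_le_mul_right t hNBcard
      have hTcard : T.card ≤ c := by
        calc T.card ≤ _ + 1 := Finset.card_insert_le _ _
          _ ≤ c := by omega
      exact le_trans (Finset.card_le_card hFT) hTcard
    -- cardinality facts
    have hK1 : S.ncard ≤ c * U.ncard := by
      have hSf := Set.toFinite S
      have hfib : ∀ b ∈ hSf.toFinset.image φ,
          (hSf.toFinset.filter fun x => φ x = b).card ≤ c := by
        intro b _
        apply hfiber b
        intro x hx
        have h := (Finset.mem_filter.mp hx).2
        exact h ▸ hφ x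
      have h := Finset.card_le_mul_card_image hSf.toFinset c hfib
      have e1 : S.ncard = hSf.toFinset.card := Set.ncard_eq_toFinset_card S hSf
      have e2 : U.ncard = (hSf.toFinset.image φ).card := by
        rw [← Set.ncard_coe_finset]
        congr 1
        rw [Finset.coe_image, Set.Finite.coe_toFinset]
      rw [e1, e2]; exact h
    have hK2 : U.ncard ≤ S.ncard := Set.ncard_image_le (Set.toFinite S)
    have hK3 : Fintype.card V ≤ Fintype.card V' := Fintype.card_le_of_injective ι hι
    have hK4 : Fintype.card V' ≤ c * Fintype.card V := by
      have hfib : ∀ b ∈ (Finset.univ : Finset V').image φ,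
          ((Finset.univ : Finset V').filter fun x => φ x = b).card ≤ c := by
        intro b _
        apply hfiber b
        intro x hx
        have h := (Finset.mem_filter.mp hx).2
        exact h ▸ hφ x
      have h := Finset.card_le_mul_card_image (Finset.univ : Finset V') c hfib
      rw [Finset.card_univ] at h
      exact le_trans h (Nat.mul_le_mul_left c (Finset.card_le_univ _))
    have hUne : U.Nonempty := hSne.image φ
    have hUpos : (0:ℝ) < (U.ncard : ℝ) := by
      have := (Set.ncard_pos (Set.toFinite U)).mpr hUne
      exact_mod_cast this
    -- expander hypotheses for U
    have hUmin : tmin ((Fintype.card V : ℕ) : ℝ) ≤ (U.ncard : ℝ) := by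
      have h1 : tmin ((Fintype.card V : ℕ) : ℝ) ≤ tmin ((Fintype.card V' : ℕ) : ℝ) :=
        hmin _ _ hnR (by exact_mod_cast hK3)
      have h2 : (c:ℝ) * tmin ((Fintype.card V' : ℕ) : ℝ) ≤ (c:ℝ) * (U.ncard : ℝ) := by
        refine le_trans hS1 ?_
        exact_mod_cast hK1
      have h3 := le_of_mul_le_mul_left h2 hcpos
      linarith
    have hUmax : (U.ncard : ℝ) ≤ tmax ((Fintype.card V : ℕ) : ℝ) := by
      have h1 : (S.ncard : ℝ) ≤ tmax ((Fintype.card V' : ℕ) : ℝ) / (c:ℝ) := hS2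
      have h2 : tmax ((Fintype.card V' : ℕ) : ℝ) ≤
          tmax ((c:ℝ) * ((Fintype.card V : ℕ) : ℝ)) := by
        refine hmax' _ _ hn'R ?_
        have := hK4
        calc ((Fintype.card V' : ℕ) : ℝ) ≤ ((c * Fintype.card V : ℕ) : ℝ) := by
              exact_mod_cast this
          _ = (c:ℝ) * ((Fintype.card V : ℕ) : ℝ) := by push_cast; ring
      have h3 : tmax ((c:ℝ) * ((Fintype.card V : ℕ) : ℝ)) ≤
          (c:ℝ) * tmax ((Fintype.card V : ℕ) : ℝ) := smax _ _ hc1 hnR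
      have h4 : (U.ncard : ℝ) ≤ (S.ncard : ℝ) := by exact_mod_cast hK2
      calc (U.ncard : ℝ) ≤ (S.ncard : ℝ) := h4
        _ ≤ tmax ((Fintype.card V' : ℕ) : ℝ) / (c:ℝ) := h1
        _ ≤ ((c:ℝ) * tmax ((Fintype.card V : ℕ) : ℝ)) / (c:ℝ) := by
            gcongr
            exact le_trans h2 h3
        _ = tmax ((Fintype.card V : ℕ) : ℝ) := by
            field_simp
    have hE := hexp U hUmin hUmax
    -- f (|S|) ≤ c * |N_G(U)|
    have hfS : f ((S.ncard : ℕ) : ℝ) ≤ (c:ℝ) * ((extNeighborSet G U).ncard : ℝ) := by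
      have h1 : f ((S.ncard : ℕ) : ℝ) ≤ f ((c:ℝ) * (U.ncard : ℝ)) := by
        refine hfmono _ _ hSpos ?_
        calc ((S.ncard : ℕ) : ℝ) ≤ ((c * U.ncard : ℕ) : ℝ) := by exact_mod_cast hK1
          _ = (c:ℝ) * (U.ncard : ℝ) := by push_cast; ring
      have h2 : f ((c:ℝ) * (U.ncard : ℝ)) ≤ (c:ℝ) * f ((U.ncard : ℕ) : ℝ) :=
        sf _ _ hc1 hUpos
      calc f ((S.ncard : ℕ) : ℝ) ≤ (c:ℝ) * f ((U.ncard : ℕ) : ℝ) := le_trans h1 h2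
        _ ≤ (c:ℝ) * ((extNeighborSet G U).ncard : ℝ) := by
            exact mul_le_mul_of_nonneg_left hE hcpos.le
    -- the key counting step
    have hNN : (extNeighborSet G U).ncard ≤ Δ ^ 2 * (extNeighborSet G' S).ncard := by
      have hUmemι : ∀ u : V, ι u ∈ S → u ∈ U := fun u hu => ⟨ι u, hu, hφι u⟩
      have hwUS : ∀ w : V, w ∉ U → ι w ∉ S := fun w hw hs => hw (hUmemι w hs)
      have hβex : ∀ w : V, ∃ z : V', w ∈ extNeighborSet G U →
          (z ∈ extNeighborSet G' S ∧ ∃ u, u ∈ U ∧ G.Adj u w ∧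
            ((ι u ∈ S ∧ ∃ h : G.Adj u w, (z ∈ walkInternal G' (P h) ∨ z = ι w)) ∨
             (ι u ∉ S ∧ ∃ v, ∃ h : G.Adj u v,
               (z ∈ walkInternal G' (P h) ∨ z = ι u)))) := by
        intro w
        by_cases hw : w ∈ extNeighborSet G U
        swap
        · exact ⟨Classical.arbitrary V', fun h => absurd h hw⟩
        obtain ⟨hwnU, u, huU, huw⟩ := hw
        have hιw : ι w ∉ S := hwUS w hwnU
        by_cases hιu : ι u ∈ S
        · obtain ⟨z, hzsup, hzN, -⟩ := path_boundary (S := S) (hpath u w huw).1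
            (Walk.start_mem_support (P huw)) hιu hιw
          refine ⟨z, fun _ => ⟨hzN, u, huU, huw, Or.inl ⟨hιu, huw, ?_⟩⟩⟩
          have hznS : z ∉ S := hzN.1
          have hza : z ≠ ι u := fun e => hznS (e ▸ hιu)
          by_cases hzw : z = ι w
          · exact Or.inr hzw
          · exact Or.inl ⟨hzsup, hza, hzw⟩
        · obtain ⟨s0, hsS, hφs⟩ := huU
          have hps := hφ s0
          rw [hφs] at hps
          rcases hps with he | ⟨v, h, hsint⟩
          · exact absurd (he ▸ hsS) hιu
          · have hrev : ((P h).reverse).IsPath := (hpath u v h).1.reverse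
            have hssup : s0 ∈ (P h).reverse.support := by
              rw [Walk.support_reverse, List.mem_reverse]; exact hsint.1
            obtain ⟨z, hzsup, hzN, hor⟩ := path_boundary (S := S) hrev hssup hsS hιu
            have hzsup' : z ∈ (P h).support := by
              rwa [Walk.support_reverse, List.mem_reverse] at hzsup
            have hzv : z ≠ ι v := by
              rcases hor with he | hne
              · exact absurd he hsint.2.2
              · exact hne
            refine ⟨z, fun _ => ⟨hzN, u, ⟨s0, hsS, hφs⟩, huw, Or.inr ⟨hιu, v, h, ?_⟩⟩⟩
            by_cases hzu : z = ι u
            · exact Or.inr hzu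
            · exact Or.inl ⟨hzsup', hzu, hzv⟩
      choose β hβ using hβex
      have hfibβ : ∀ (z : V') (F : Finset V),
          (∀ w ∈ F, w ∈ extNeighborSet G U ∧ β w = z) → F.card ≤ Δ ^ 2 := by
        intro z F hF
        have hFnU : ∀ w ∈ F, w ∉ U := fun w hw => ((hF w hw).1).1
        have hW : ∀ w ∈ F, ∃ u, u ∈ U ∧ G.Adj u w ∧
            ((ι u ∈ S ∧ ∃ h : G.Adj u w, (z ∈ walkInternal G' (P h) ∨ z = ι w)) ∨
             (ι u ∉ S ∧ ∃ v, ∃ h : G.Adj u v,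
               (z ∈ walkInternal G' (P h) ∨ z = ι u))) := by
          intro w hw
          have h1 := hβ w (hF w hw).1
          rw [(hF w hw).2] at h1
          exact h1.2
        rcases hcover z with ⟨z₀, rfl⟩ | ⟨a₀, b₀, h₀, hz₀⟩
        · -- z = ι z₀
          by_cases hz₀U : z₀ ∈ U
          · have hsubF : ∀ w ∈ F, G.Adj z₀ w := by
              intro w hw
              obtain ⟨u, huU, huw, hAB⟩ := hW w hw
              rcases hAB with ⟨hιu, h, hor⟩ | ⟨hιu, v, h, hor⟩
              · rcases hor with hin | he
                · exact absurd (Set.mem_range_self z₀) (hint _ _ h _ hin)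
                · exact absurd (show w ∈ U by rw [← hι he]; exact hz₀U) (hFnU w hw)
              · rcases hor with hin | he
                · exact absurd (Set.mem_range_self z₀) (hint _ _ h _ hin)
                · have hu : u = z₀ := hι he.symm
                  rw [← hu]; exact huw
            have hsub : F ⊆ (Set.toFinite (G.neighborSet z₀)).toFinset := fun w hw =>
              (Set.Finite.mem_toFinset _).mpr ((G.mem_neighborSet _ _).mpr (hsubF w hw))
            have h1 := Finset.card_le_card hsub
            have h2 : (Set.toFinite (G.neighborSet z₀)).toFinset.card ≤ Δ := by
              have := hdeg z₀
              rwa [Set.ncard_eq_toFinset_card _ (Set.toFinite _)] at this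
            have h3 : Δ ≤ Δ ^ 2 := by nlinarith
            omega
          · have hall : ∀ w ∈ F, w = z₀ := by
              intro w hw
              obtain ⟨u, huU, huw, hAB⟩ := hW w hw
              rcases hAB with ⟨hιu, h, hor⟩ | ⟨hιu, v, h, hor⟩
              · rcases hor with hin | he
                · exact absurd (Set.mem_range_self z₀) (hint _ _ h _ hin)
                · exact (hι he).symm
              · rcases hor with hin | he
                · exact absurd (Set.mem_range_self z₀) (hint _ _ h _ hin)
                · exact absurd (show z₀ ∈ U by rw [hι he]; exact huU) hz₀U
            have hsub : F ⊆ {z₀} := fun w hw => Finset.mem_singleton.mpr (hall w hw)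
            have h1 := Finset.card_le_card hsub
            have h2 := pow_pos hΔ 2
            simp only [Finset.card_singleton] at h1
            omega
        · -- z internal of P h₀
          have hW' : ∀ w ∈ F,
              ((w = b₀ ∧ a₀ ∈ U ∧ ι a₀ ∈ S) ∨ (w = a₀ ∧ b₀ ∈ U ∧ ι b₀ ∈ S)) ∨
              (∃ u v, u ∈ U ∧ ι u ∉ S ∧ G.Adj u w ∧ G.Adj u v ∧
                ((u = a₀ ∧ v = b₀) ∨ (u = b₀ ∧ v = a₀))) := by
            intro w hw
            obtain ⟨u, huU, huw, hAB⟩ := hW w hw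
            rcases hAB with ⟨hιu, h, hor⟩ | ⟨hιu, v, h, hor⟩
            · rcases hor with hin | he
              · have hee : s(u, w) = s(a₀, b₀) := by
                  by_contra hne
                  exact hdisjp u w a₀ b₀ h h₀ hne z hin hz₀
                rcases Sym2.eq_iff.mp hee with ⟨hu1, hw1⟩ | ⟨hu1, hw1⟩
                · exact Or.inl (Or.inl ⟨hw1,
                    show a₀ ∈ U by rw [← hu1]; exact huU,
                    show ι a₀ ∈ S by rw [← hu1]; exact hιu⟩)
                · exact Or.inl (Or.inr ⟨hw1,
                    show b₀ ∈ U by rw [← hu1]; exact huU,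
                    show ι b₀ ∈ S by rw [← hu1]; exact hιu⟩)
              · exact absurd (show z ∈ Set.range ι by
                  rw [he]; exact Set.mem_range_self w) (hint _ _ h₀ _ hz₀)
            · rcases hor with hin | he
              · have hee : s(u, v) = s(a₀, b₀) := by
                  by_contra hne
                  exact hdisjp u v a₀ b₀ h h₀ hne z hin hz₀
                rcases Sym2.eq_iff.mp hee with hp1 | hp1
                · exact Or.inr ⟨u, v, huU, hιu, huw, h, Or.inl hp1⟩
                · exact Or.inr ⟨u, v, huU, hιu, huw, h, Or.inr hp1⟩
              · exact absurd (show z ∈ Set.range ι by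
                  rw [he]; exact Set.mem_range_self u) (hint _ _ h₀ _ hz₀)
          by_cases hA : ∃ w₀ ∈ F, ((w₀ = b₀ ∧ a₀ ∈ U ∧ ι a₀ ∈ S) ∨
              (w₀ = a₀ ∧ b₀ ∈ U ∧ ι b₀ ∈ S))
          · obtain ⟨w₀, hw₀F, hw₀⟩ := hA
            have hall : ∀ w ∈ F, w = w₀ := by
              intro w hw
              rcases hW' w hw with hAw | ⟨u, v, huU, hιu, huw, huv, hpat⟩
              · rcases hw₀ with ⟨e0, hU0, hS0⟩ | ⟨e0, hU0, hS0⟩ <;>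
                  rcases hAw with ⟨e1, hU1, hS1'⟩ | ⟨e1, hU1, hS1'⟩
                · exact e1.trans e0.symm
                · exact absurd (show w ∈ U by rw [e1]; exact hU0) (hFnU w hw)
                · exact absurd (show w ∈ U by rw [e1]; exact hU0) (hFnU w hw)
                · exact e1.trans e0.symm
              · rcases hw₀ with ⟨e0, hU0, hS0⟩ | ⟨e0, hU0, hS0⟩ <;>
                  rcases hpat with ⟨eu, ev⟩ | ⟨eu, ev⟩
                · exact absurd (show ι u ∈ S by rw [eu]; exact hS0) hιu
                · exact absurd (show w₀ ∈ U by rw [e0, ← eu]; exact huU) (hFnU w₀ hw₀F)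
                · exact absurd (show w₀ ∈ U by rw [e0, ← eu]; exact huU) (hFnU w₀ hw₀F)
                · exact absurd (show ι u ∈ S by rw [eu]; exact hS0) hιu
            have hsub : F ⊆ {w₀} := fun w hw => Finset.mem_singleton.mpr (hall w hw)
            have h1 := Finset.card_le_card hsub
            have h2 := pow_pos hΔ 2
            simp only [Finset.card_singleton] at h1
            omega
          · have hBall : ∀ w ∈ F, ∃ u v, u ∈ U ∧ ι u ∉ S ∧ G.Adj u w ∧ G.Adj u v ∧
                ((u = a₀ ∧ v = b₀) ∨ (u = b₀ ∧ v = a₀)) := by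
              intro w hw
              rcases hW' w hw with hAw | hB
              · exact absurd ⟨w, hw, hAw⟩ hA
              · exact hB
            by_cases hΔ1 : Δ = 1
            · rcases F.eq_empty_or_nonempty with rfl | ⟨w₁, hw₁⟩
              · simp
              · have hkey : ∀ (u w v : V), G.Adj u w → G.Adj u v → w = v := by
                  intro u w v huw huv
                  have hd := hdeg u
                  rw [hΔ1] at hd
                  exact (Set.ncard_le_one (Set.toFinite _)).mp hd w
                    ((G.mem_neighborSet _ _).mpr huw) v ((G.mem_neighborSet _ _).mpr huv)
                obtain ⟨u₁, v₁, hU1, hNS1, huw1, huv1, hpat1⟩ := hBall w₁ hw₁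
                have he1 : w₁ = v₁ := hkey u₁ w₁ v₁ huw1 huv1
                have hall : ∀ w ∈ F, w = w₁ := by
                  intro w hw
                  obtain ⟨u, v, hU2, hNS2, huw2, huv2, hpat2⟩ := hBall w hw
                  have he2 : w = v := hkey u w v huw2 huv2
                  rcases hpat1 with ⟨ea1, eb1⟩ | ⟨ea1, eb1⟩ <;>
                    rcases hpat2 with ⟨ea2, eb2⟩ | ⟨ea2, eb2⟩
                  · rw [he2, eb2, ← eb1, ← he1]
                  · exact absurd (show w ∈ U by
                      rw [he2, eb2, ← ea1]; exact hU1) (hFnU w hw)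
                  · exact absurd (show w ∈ U by
                      rw [he2, eb2, ← ea1]; exact hU1) (hFnU w hw)
                  · rw [he2, eb2, ← eb1, ← he1]
                have hsub : F ⊆ {w₁} := fun w hw => Finset.mem_singleton.mpr (hall w hw)
                have h1 := Finset.card_le_card hsub
                have h2 := pow_pos hΔ 2
                simp only [Finset.card_singleton] at h1
                omega
            · have hΔ2 : 2 ≤ Δ := by omega
              have hsub : F ⊆ (Set.toFinite (G.neighborSet a₀)).toFinset ∪
                  (Set.toFinite (G.neighborSet b₀)).toFinset := by
                intro w hw
                obtain ⟨u, v, _, _, huw, _, hpat⟩ := hBall w hw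
                rcases hpat with ⟨ea, _⟩ | ⟨ea, _⟩
                · exact Finset.mem_union_left _ ((Set.Finite.mem_toFinset _).mpr
                    ((G.mem_neighborSet _ _).mpr (show G.Adj a₀ w by rw [← ea]; exact huw)))
                · exact Finset.mem_union_right _ ((Set.Finite.mem_toFinset _).mpr
                    ((G.mem_neighborSet _ _).mpr (show G.Adj b₀ w by rw [← ea]; exact huw)))
              have h1 := Finset.card_le_card hsub
              have h2 := Finset.card_union_le (Set.toFinite (G.neighborSet a₀)).toFinset
                (Set.toFinite (G.neighborSet b₀)).toFinset
              have h3 : (Set.toFinite (G.neighborSet a₀)).toFinset.card ≤ Δ := by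
                have := hdeg a₀
                rwa [Set.ncard_eq_toFinset_card _ (Set.toFinite _)] at this
              have h4 : (Set.toFinite (G.neighborSet b₀)).toFinset.card ≤ Δ := by
                have := hdeg b₀
                rwa [Set.ncard_eq_toFinset_card _ (Set.toFinite _)] at this
              have h5 : 2 * Δ ≤ Δ ^ 2 := by nlinarith
              omega
      -- assemble
      have hfin := Set.toFinite (extNeighborSet G U)
      have hfib' : ∀ b ∈ hfin.toFinset.image β,
          (hfin.toFinset.filter fun w => β w = b).card ≤ Δ ^ 2 := by
        intro b _
        apply hfibβ b
        intro w hw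
        have h := Finset.mem_filter.mp hw
        exact ⟨(Set.Finite.mem_toFinset _).mp h.1, h.2⟩
      have h := Finset.card_le_mul_card_image hfin.toFinset (Δ ^ 2) hfib'
      have him : hfin.toFinset.image β ⊆
          (Set.toFinite (extNeighborSet G' S)).toFinset := by
        intro z hz
        obtain ⟨w, hwF, rfl⟩ := Finset.mem_image.mp hz
        have hw : w ∈ extNeighborSet G U := (Set.Finite.mem_toFinset _).mp hwF
        exact (Set.Finite.mem_toFinset _).mpr (hβ w hw).1
      calc (extNeighborSet G U).ncard = hfin.toFinset.card :=
            Set.ncard_eq_toFinset_card _ hfin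
        _ ≤ Δ ^ 2 * (hfin.toFinset.image β).card := h
        _ ≤ Δ ^ 2 * (Set.toFinite (extNeighborSet G' S)).toFinset.card :=
            Nat.mul_le_mul_left _ (Finset.card_le_card him)
        _ = Δ ^ 2 * (extNeighborSet G' S).ncard := by
            rw [← Set.ncard_eq_toFinset_card _ (Set.toFinite _)]
    -- conclude
    have hNNR : ((extNeighborSet G U).ncard : ℝ) ≤
        (Δ:ℝ)^2 * ((extNeighborSet G' S).ncard : ℝ) := by
      calc ((extNeighborSet G U).ncard : ℝ)
          ≤ ((Δ ^ 2 * (extNeighborSet G' S).ncard : ℕ) : ℝ) := by exact_mod_cast hNN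
        _ = (Δ:ℝ)^2 * ((extNeighborSet G' S).ncard : ℝ) := by push_cast; ring
    rw [div_le_iff₀ (by positivity)]
    calc f ((S.ncard : ℕ) : ℝ) ≤ (c:ℝ) * ((extNeighborSet G U).ncard : ℝ) := hfS
      _ ≤ (c:ℝ) * ((Δ:ℝ)^2 * ((extNeighborSet G' S).ncard : ℝ)) :=
          mul_le_mul_of_nonneg_left hNNR hcpos.le
      _ = ((extNeighborSet G' S).ncard : ℝ) * ((c:ℝ) * (Δ:ℝ)^2) := by ring
end

section
/- Let (G, ψ) be an ordered graph, 𝒫 a partition of V(G), G_𝒫 any graph with vertex set 𝒫, and r a positive integer. Let G_𝒫^r denote the r-th power of G_𝒫, i.e., the graph on 𝒫 in which two distinct parts are adjacent exactly when their distance in G_𝒫 is at most r. Then str(𝒫, G_𝒫^r) ≤ (str(𝒫, G_𝒫) + 1)^r. -/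
open SimpleGraph

/-- The convex closure (span) of a set of vertices in a linearly ordered vertex set. -/
def conv {V : Type*} [LinearOrder V] (X : Set V) : Set V :=
  {v | ∃ a ∈ X, ∃ b ∈ X, a ≤ v ∧ v ≤ b}

/-- The `r`-th power of a graph: two distinct vertices are adjacent exactly when they
are joined by a walk of length at most `r`. -/
def powerGraph {α : Type*} (H : SimpleGraph α) (r : ℕ) : SimpleGraph α where
  Adj x y := x ≠ y ∧ ∃ w : H.Walk x y, w.length ≤ r
  symm := by
    constructor
    rintro x y ⟨hxy, w, hw⟩
    exact ⟨hxy.symm, w.reverse, by simpa using hw⟩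
  loopless := by
    constructor
    rintro x ⟨hx, -⟩
    exact hx rfl

/-- The `H`-stretch of a part `X` of the partition `Prt` (w.r.t. the vertex ordering):
the number of parts whose span meets the span of the union of the closed
`H`-neighborhood of `X`. -/
noncomputable def strOf {V : Type*} [LinearOrder V] (Prt : Set (Set V))
    (H : SimpleGraph ↥Prt) (X : ↥Prt) : ℕ :=
  {Y : ↥Prt | (conv (Y : Set V) ∩
    conv (⋃ Z ∈ {Z : ↥Prt | Z = X ∨ H.Adj X Z}, (Z : Set V))).Nonempty}.ncard

/-- The stretch `str(Prt, H)`: the maximum `H`-stretch of a part of `Prt`. -/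
noncomputable def strP {V : Type*} [LinearOrder V] (Prt : Set (Set V))
    (H : SimpleGraph ↥Prt) : ℕ :=
  sSup (Set.range (strOf Prt H))

/-
Write `N[W]` for the closed neighbourhood of a part `W` in `H`, `B_k(X)` for the parts within
walk-distance `k` of `X`, and `I(W)` for the set of parts interfering with `W`. For `r = k + 1`
the closed neighbourhood of `X` in `H^r` is `B_{k+1}(X) = ⋃_{W ∈ B_k(X)} N[W]`. Every `N[W]`
with `W ∈ B_k(X)` meets the vertex set of `B_k(X)`, so by induction on `k` the span of the vertex
set of `B_{k+1}(X)` is covered by the spans of the vertex sets of `N[W]`, `W ∈ B_k(X)`. Hence every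
part interfering with `X` in `H^r` lies in `I(W)` for some `W ∈ B_k(X)`. Since parts are nonempty,
`N[W] ⊆ I(W)`, so `|N[W]| ≤ s := str(𝒫, H)` and `|B_k(X)| ≤ s^k`; altogether the
`H^r`-stretch of `X` is at most `s^k · s = s^r`.
-/

lemma Set.ncard_biUnion_le_ncard_mul {ι α : Type*} {t : Set ι} (ht : t.Finite) (s : ι → Set α)
    {m : ℕ} (hs : ∀ i ∈ t, (s i).ncard ≤ m) : (⋃ i ∈ t, s i).ncard ≤ t.ncard * m := by
  lift t to Finset ι using ht
  calc (⋃ i ∈ (t : Set ι), s i).ncard ≤ ∑ i ∈ t, (s i).ncard := t.set_ncard_biUnion_le s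
    _ ≤ ∑ _i ∈ t, m := Finset.sum_le_sum hs
    _ = (t : Set ι).ncard * m := by simp

section conv

variable {V : Type*} [LinearOrder V]

lemma subset_conv (X : Set V) : X ⊆ conv X :=
  fun a ha => ⟨a, ha, a, ha, le_rfl, le_rfl⟩

/-- If every piece `S i` of a cover of `B` meets `A`, a point of `conv B` outside `conv A` is
caught between the endpoint of its own piece and a point of `A` in that piece. -/
lemma conv_subset_conv_union_biUnion_conv {ι : Type*} {A B : Set V} {s : Set ι}
    {S : ι → Set V} (hB : B ⊆ ⋃ i ∈ s, S i) (hS : ∀ i ∈ s, (S i ∩ A).Nonempty) :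
    conv B ⊆ conv A ∪ ⋃ i ∈ s, conv (S i) := by
  rintro v ⟨a, ha, b, hb, hav, hvb⟩
  obtain ⟨i, hi, hai⟩ := Set.mem_iUnion₂.mp (hB ha)
  obtain ⟨j, hj, hbj⟩ := Set.mem_iUnion₂.mp (hB hb)
  obtain ⟨c, hci, hcA⟩ := hS i hi
  obtain ⟨d, hdj, hdA⟩ := hS j hj
  rcases le_or_gt v c with hvc | hcv
  · exact Or.inr (Set.mem_biUnion hi ⟨a, hai, c, hci, hav, hvc⟩)
  rcases le_or_gt d v with hdv | hvd
  · exact Or.inr (Set.mem_biUnion hj ⟨d, hdj, b, hbj, hdv, hvb⟩)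
  · exact Or.inl ⟨c, hcA, d, hdA, hcv.le, hvd.le⟩

end conv

namespace SimpleGraph

variable {α : Type*} (H : SimpleGraph α)

def closedNbhd (x : α) : Set α := {z | z = x ∨ H.Adj x z}

def walkBall (x : α) (k : ℕ) : Set α := {z | ∃ w : H.Walk x z, w.length ≤ k}

variable {H}

lemma self_mem_walkBall (x : α) (k : ℕ) : x ∈ H.walkBall x k :=
  ⟨Walk.nil, Nat.zero_le k⟩

lemma walkBall_mono (x : α) {k l : ℕ} (hkl : k ≤ l) : H.walkBall x k ⊆ H.walkBall x l :=
  fun _ ⟨w, hw⟩ => ⟨w, hw.trans hkl⟩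

lemma walkBall_zero (x : α) : H.walkBall x 0 = {x} := by
  ext z
  constructor
  · rintro ⟨w, hw⟩
    exact (w.eq_of_length_eq_zero (Nat.le_zero.mp hw)).symm
  · rintro rfl
    exact self_mem_walkBall z 0

lemma walkBall_succ (x : α) (k : ℕ) :
    H.walkBall x (k + 1) = ⋃ y ∈ H.walkBall x k, H.closedNbhd y := by
  ext z
  simp only [Set.mem_iUnion, exists_prop]
  constructor
  · rintro ⟨w, hw⟩
    cases w using Walk.concatRec with
    | Hnil => exact ⟨x, self_mem_walkBall x k, Or.inl rfl⟩
    | Hconcat p h =>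
      rw [Walk.length_concat] at hw
      exact ⟨_, ⟨p, by omega⟩, Or.inr h⟩
  · rintro ⟨y, ⟨p, hp⟩, rfl | h⟩
    · exact ⟨p, by omega⟩
    · exact ⟨p.concat h, by rw [Walk.length_concat]; omega⟩

lemma closedNbhd_powerGraph (r : ℕ) (x : α) :
    (powerGraph H r).closedNbhd x = H.walkBall x r := by
  ext z
  constructor
  · rintro (rfl | ⟨-, w, hw⟩)
    · exact self_mem_walkBall z r
    · exact ⟨w, hw⟩
  · rintro ⟨w, hw⟩
    by_cases hzx : z = x
    · exact Or.inl hzx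
    · exact Or.inr ⟨Ne.symm hzx, w, hw⟩

lemma ncard_walkBall_le [Finite α] {d : ℕ} (hd : ∀ y, (H.closedNbhd y).ncard ≤ d) (x : α) :
    ∀ k, (H.walkBall x k).ncard ≤ d ^ k
  | 0 => by simp [walkBall_zero]
  | k + 1 => by
    rw [walkBall_succ, pow_succ]
    calc (⋃ y ∈ H.walkBall x k, H.closedNbhd y).ncard ≤ (H.walkBall x k).ncard * d :=
          Set.ncard_biUnion_le_ncard_mul (Set.toFinite _) _ fun y _ => hd y
      _ ≤ d ^ k * d := Nat.mul_le_mul_right d (ncard_walkBall_le hd x k)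

lemma conv_biUnion_walkBall_succ_subset {V : Type*} [LinearOrder V] {P : α → Set V}
    (hP : ∀ i, (P i).Nonempty) (i : α) :
    ∀ k, conv (⋃ j ∈ H.walkBall i (k + 1), P j) ⊆
      ⋃ j ∈ H.walkBall i k, conv (⋃ l ∈ H.closedNbhd j, P l)
  | 0 => by simp [walkBall_succ, walkBall_zero]
  | k + 1 => by
    refine (conv_subset_conv_union_biUnion_conv (A := ⋃ j ∈ H.walkBall i (k + 1), P j)
      ?_ ?_).trans (Set.union_subset ?_ subset_rfl)
    · intro v hv
      simp only [walkBall_succ i (k + 1), Set.mem_iUnion, exists_prop] at hv ⊢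
      obtain ⟨l, ⟨j, hj, hl⟩, hv⟩ := hv
      exact ⟨j, hj, l, hl, hv⟩
    · intro j hj
      obtain ⟨v, hv⟩ := hP j
      exact ⟨v, Set.mem_biUnion (Or.inl rfl) hv, Set.mem_biUnion hj hv⟩
    · exact (conv_biUnion_walkBall_succ_subset hP i k).trans
        (Set.biUnion_subset_biUnion_left (walkBall_mono i k.le_succ))

end SimpleGraph

section stretch

open SimpleGraph

variable {V : Type*} [LinearOrder V] {Prt : Set (Set V)}

/-- `strOf Prt H X` is, by definition, the `ncard` of this set. -/
def interferers (Prt : Set (Set V)) (H : SimpleGraph ↥Prt) (X : ↥Prt) : Set ↥Prt :=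
  {Y | (conv (Y : Set V) ∩ conv (⋃ Z ∈ H.closedNbhd X, (Z : Set V))).Nonempty}

lemma strOf_le_strP [Finite ↥Prt] (H : SimpleGraph ↥Prt) (X : ↥Prt) :
    strOf Prt H X ≤ strP Prt H :=
  le_csSup (Set.finite_range _).bddAbove ⟨X, rfl⟩

lemma closedNbhd_subset_interferers (hne : ∀ X : ↥Prt, (X : Set V).Nonempty)
    (H : SimpleGraph ↥Prt) (X : ↥Prt) : H.closedNbhd X ⊆ interferers Prt H X := by
  intro Z hZ
  obtain ⟨a, ha⟩ := hne Z
  exact ⟨a, subset_conv _ ha, subset_conv _ (Set.mem_biUnion hZ ha)⟩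

lemma interferers_powerGraph_succ_subset (hne : ∀ X : ↥Prt, (X : Set V).Nonempty)
    (H : SimpleGraph ↥Prt) (X : ↥Prt) (k : ℕ) :
    interferers Prt (powerGraph H (k + 1)) X ⊆ ⋃ W ∈ H.walkBall X k, interferers Prt H W := by
  rintro Y ⟨v, hvY, hvX⟩
  rw [closedNbhd_powerGraph] at hvX
  obtain ⟨W, hW, hvW⟩ := Set.mem_iUnion₂.mp (conv_biUnion_walkBall_succ_subset hne X k hvX)
  exact Set.mem_biUnion hW ⟨v, hvY, hvW⟩

end stretch

theorem stmt12_general {V : Type*} [Fintype V] [LinearOrder V]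
    (Prt : Set (Set V)) (hpart : Setoid.IsPartition Prt)
    (H : SimpleGraph ↥Prt) (r : ℕ) (hr : 0 < r) :
    strP Prt (powerGraph H r) ≤ (strP Prt H + 1) ^ r := by
  have hne : ∀ X : ↥Prt, (X : Set V).Nonempty := fun X =>
    Set.nonempty_iff_ne_empty.mpr fun h => hpart.1 (h ▸ X.2)
  obtain ⟨k, rfl⟩ := Nat.exists_eq_add_one_of_ne_zero hr.ne'
  set s := strP Prt H
  have hnbhd (W : ↥Prt) : (H.closedNbhd W).ncard ≤ s :=
    (Set.ncard_le_ncard (closedNbhd_subset_interferers hne H W)).trans (strOf_le_strP H W)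
  refine csSup_le' ?_
  rintro _ ⟨X, rfl⟩
  calc strOf Prt (powerGraph H (k + 1)) X
      ≤ (⋃ W ∈ H.walkBall X k, interferers Prt H W).ncard :=
        Set.ncard_le_ncard (interferers_powerGraph_succ_subset hne H X k)
    _ ≤ (H.walkBall X k).ncard * s :=
        Set.ncard_biUnion_le_ncard_mul (Set.toFinite _) _ fun W _ => strOf_le_strP H W
    _ ≤ s ^ k * s := Nat.mul_le_mul_right s (ncard_walkBall_le hnbhd X k)
    _ = s ^ (k + 1) := (pow_succ s k).symm
    _ ≤ (s + 1) ^ (k + 1) := Nat.pow_le_pow_left s.le_succ _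

theorem stmt12 {V : Type*} [Fintype V] [LinearOrder V] (G : SimpleGraph V)
    (Prt : Set (Set V)) (hpart : Setoid.IsPartition Prt)
    (H : SimpleGraph ↥Prt) (r : ℕ) (hr : 0 < r) :
    strP Prt (powerGraph H r) ≤ (strP Prt H + 1) ^ r :=
  stmt12_general Prt hpart H r hr
end

section
/- Let G be a finite simple graph, 𝒫 a partition of V(G), and P_1 ≠ P_2 two parts of 𝒫; let 𝒫' be the partition obtained from 𝒫 by merging P_1 and P_2 into P* = P_1 ∪ P_2. Let H be a nonempty connected red-induced subtrigraph of G/𝒫' such that P* ∈ V(H) ∪ (R_{G/𝒫'}(V(H)) \ B_{G/𝒫'}(V(H))). For j = 1, 2, let 𝒬_j = B_{G/𝒫}(P_j) ∩ (V(H) \ {P*}). Then: (1) for each j ∈ {1,2}, 𝒬_j ∩ B_{G/𝒫}(P_{3−j}) = ∅; (2) 𝒬_1 and 𝒬_2 are disjoint; (3) every subset of V(H) \ {P*} that induces a connected subgraph of the red graph ℛ(G/𝒫') is a set of parts of 𝒫 that induces a connected subgraph of ℛ(G/𝒫) and contains no two parts joined by a black edge of G/𝒫. -/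
open SimpleGraph

/-- `X` is complete to `Y` in `G`. -/
def IsCompleteTo {V : Type*} (G : SimpleGraph V) (X Y : Set V) : Prop :=
  ∀ x ∈ X, ∀ y ∈ Y, G.Adj x y

/-- `X` is anti-complete to `Y` in `G`. -/
def IsAnticompleteTo {V : Type*} (G : SimpleGraph V) (X Y : Set V) : Prop :=
  ∀ x ∈ X, ∀ y ∈ Y, ¬ G.Adj x y

/-- Distinct parts `X`, `Y` are joined by a black edge of the quotient trigraph. -/
def blackAdj {V : Type*} (G : SimpleGraph V) (X Y : Set V) : Prop :=
  X ≠ Y ∧ IsCompleteTo G X Y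

/-- Distinct parts `X`, `Y` are joined by a red edge of the quotient trigraph. -/
def redAdj {V : Type*} (G : SimpleGraph V) (X Y : Set V) : Prop :=
  X ≠ Y ∧ ¬ IsCompleteTo G X Y ∧ ¬ IsAnticompleteTo G X Y

/-- `B_{G/Prt}(X)`: the parts of `Prt` joined to `X` by a black edge. -/
def blackNbrs {V : Type*} (G : SimpleGraph V) (Prt : Set (Set V)) (X : Set V) :
    Set (Set V) :=
  {Y ∈ Prt | blackAdj G X Y}

/-- `B_{G/Prt}(𝒱)`: the parts of `Prt` outside `𝒱` joined by a black edge to a part of `𝒱`. -/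
def blackNbrsOfSet {V : Type*} (G : SimpleGraph V) (Prt : Set (Set V))
    (F : Set (Set V)) : Set (Set V) :=
  {Y ∈ Prt | Y ∉ F ∧ ∃ X ∈ F, blackAdj G X Y}

/-- `R_{G/Prt}(𝒱)`: the parts of `Prt` outside `𝒱` joined by a red edge to a part of `𝒱`. -/
def redNbrsOfSet {V : Type*} (G : SimpleGraph V) (Prt : Set (Set V))
    (F : Set (Set V)) : Set (Set V) :=
  {Y ∈ Prt | Y ∉ F ∧ ∃ X ∈ F, redAdj G X Y}

/-- The red graph induced on a set of parts. -/
def redGraphOn {V : Type*} (G : SimpleGraph V) (F : Set (Set V)) :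
    SimpleGraph ↥F where
  Adj X Y := redAdj G (X : Set V) (Y : Set V)
  symm := by
    constructor
    rintro X Y ⟨hne, hc, ha⟩
    refine ⟨hne.symm, fun hc' => hc fun x hx y hy => (hc' y hy x hx).symm,
      fun ha' => ha fun x hx y hy hadj => ha' y hy x hx hadj.symm⟩
  loopless := by
    constructor
    rintro X ⟨hne, -⟩
    exact hne rfl

/-- `F` is (the vertex set of) a connected red-induced subtrigraph of `G/Prt`. -/
def ConnectedRedInduced {V : Type*} (G : SimpleGraph V) (Prt : Set (Set V))
    (F : Set (Set V)) : Prop :=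
  F ⊆ Prt ∧ (∀ X ∈ F, ∀ Y ∈ F, ¬ blackAdj G X Y) ∧ (redGraphOn G F).Connected

/-!
A part of `𝒱` other than `P* = P₁ ∪ P₂` that is complete to both `P₁` and `P₂` is complete to
`P*`, a black edge between `P*` and `𝒱` that the position of `P*` rules out. The parts of `𝒱`
other than `P*` are untouched by the merge, so they are parts of `𝒫` with the same red and black
edges among them.
-/

section QuotientTrigraph

variable {V : Type*} {G : SimpleGraph V}

lemma blackAdj_union_of_blackAdj {P₁ P₂ X : Set V} (h₁ : blackAdj G P₁ X)
    (h₂ : blackAdj G P₂ X) (hX : X ≠ P₁ ∪ P₂) : blackAdj G X (P₁ ∪ P₂) :=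
  ⟨hX, fun x hx y hy =>
    hy.elim (fun hy => (h₁.2 y hy x hx).symm) (fun hy => (h₂.2 y hy x hx).symm)⟩

lemma not_blackAdj_of_mem_or_redNbr {Prt 𝒱 : Set (Set V)} {P X : Set V} (hP : P ∈ Prt)
    (h𝒱 : ∀ X ∈ 𝒱, ∀ Y ∈ 𝒱, ¬ blackAdj G X Y)
    (hPos : P ∈ 𝒱 ∨ (P ∈ redNbrsOfSet G Prt 𝒱 ∧ P ∉ blackNbrsOfSet G Prt 𝒱))
    (hX : X ∈ 𝒱) : ¬ blackAdj G X P := by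
  rcases hPos with hP𝒱 | ⟨⟨-, hP𝒱, -⟩, hnb⟩
  · exact h𝒱 X hX P hP𝒱
  · exact fun hXP => hnb ⟨hP, hP𝒱, X, hX, hXP⟩

lemma notMem_blackNbrs_of_mem_blackNbrs {Prt Prt' 𝒱 : Set (Set V)} {P₁ P₂ X : Set V}
    (hP : P₁ ∪ P₂ ∈ Prt') (h𝒱 : ∀ X ∈ 𝒱, ∀ Y ∈ 𝒱, ¬ blackAdj G X Y)
    (hPos : P₁ ∪ P₂ ∈ 𝒱 ∨
      (P₁ ∪ P₂ ∈ redNbrsOfSet G Prt' 𝒱 ∧ P₁ ∪ P₂ ∉ blackNbrsOfSet G Prt' 𝒱))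
    (hX : X ∈ 𝒱 \ {P₁ ∪ P₂}) (h₁ : X ∈ blackNbrs G Prt P₁) : X ∉ blackNbrs G Prt P₂ :=
  fun h₂ => not_blackAdj_of_mem_or_redNbr hP h𝒱 hPos hX.1
    (blackAdj_union_of_blackAdj h₁.2 h₂.2 hX.2)

end QuotientTrigraph

theorem stmt14_general {V : Type*} (G : SimpleGraph V)
    (Prt : Set (Set V))
    (P₁ P₂ : Set V)
    (Prt' : Set (Set V)) (hPrt' : Prt' = insert (P₁ ∪ P₂) (Prt \ {P₁, P₂}))
    (𝒱 : Set (Set V))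
    (hH : ConnectedRedInduced G Prt' 𝒱)
    (hPstar : P₁ ∪ P₂ ∈ 𝒱 ∨
      (P₁ ∪ P₂ ∈ redNbrsOfSet G Prt' 𝒱 ∧ P₁ ∪ P₂ ∉ blackNbrsOfSet G Prt' 𝒱)) :
    ((blackNbrs G Prt P₁ ∩ (𝒱 \ {P₁ ∪ P₂})) ∩ blackNbrs G Prt P₂ = ∅) ∧
    ((blackNbrs G Prt P₂ ∩ (𝒱 \ {P₁ ∪ P₂})) ∩ blackNbrs G Prt P₁ = ∅) ∧
    ((blackNbrs G Prt P₁ ∩ (𝒱 \ {P₁ ∪ P₂})) ∩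
      (blackNbrs G Prt P₂ ∩ (𝒱 \ {P₁ ∪ P₂})) = ∅) ∧
    (∀ 𝒮 : Set (Set V), 𝒮 ⊆ 𝒱 \ {P₁ ∪ P₂} → (redGraphOn G 𝒮).Connected →
      𝒮 ⊆ Prt ∧ (redGraphOn G 𝒮).Connected ∧
        ∀ X ∈ 𝒮, ∀ Y ∈ 𝒮, ¬ blackAdj G X Y) := by
  obtain ⟨h𝒱Prt', h𝒱black, -⟩ := hH
  have hP : P₁ ∪ P₂ ∈ Prt' := hPrt' ▸ Set.mem_insert _ _
  have hdisj : ∀ X, X ∈ 𝒱 \ {P₁ ∪ P₂} → X ∈ blackNbrs G Prt P₁ → X ∉ blackNbrs G Prt P₂ :=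
    fun X hX h₁ => notMem_blackNbrs_of_mem_blackNbrs hP h𝒱black hPstar hX h₁
  have hsub : 𝒱 \ {P₁ ∪ P₂} ⊆ Prt :=
    (Set.sdiff_singleton_subset_iff.mpr (hPrt' ▸ h𝒱Prt')).trans Set.sdiff_subset
  refine ⟨?_, ?_, ?_, fun 𝒮 h𝒮 hconn => ⟨h𝒮.trans hsub, hconn,
    fun X hX Y hY => h𝒱black X (h𝒮 hX).1 Y (h𝒮 hY).1⟩⟩
  · exact Set.eq_empty_iff_forall_notMem.mpr fun X ⟨⟨h₁, hX⟩, h₂⟩ => hdisj X hX h₁ h₂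
  · exact Set.eq_empty_iff_forall_notMem.mpr fun X ⟨⟨h₂, hX⟩, h₁⟩ => hdisj X hX h₁ h₂
  · exact Set.eq_empty_iff_forall_notMem.mpr fun X ⟨⟨h₁, hX⟩, h₂, _⟩ => hdisj X hX h₁ h₂

theorem stmt14 {V : Type*} [Fintype V] (G : SimpleGraph V)
    (Prt : Set (Set V)) (hpart : Setoid.IsPartition Prt)
    (P₁ P₂ : Set V) (hP₁ : P₁ ∈ Prt) (hP₂ : P₂ ∈ Prt) (hP₁₂ : P₁ ≠ P₂)
    (Prt' : Set (Set V)) (hPrt' : Prt' = insert (P₁ ∪ P₂) (Prt \ {P₁, P₂}))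
    (𝒱 : Set (Set V)) (h𝒱 : 𝒱.Nonempty)
    (hH : ConnectedRedInduced G Prt' 𝒱)
    (hPstar : P₁ ∪ P₂ ∈ 𝒱 ∨
      (P₁ ∪ P₂ ∈ redNbrsOfSet G Prt' 𝒱 ∧ P₁ ∪ P₂ ∉ blackNbrsOfSet G Prt' 𝒱)) :
    ((blackNbrs G Prt P₁ ∩ (𝒱 \ {P₁ ∪ P₂})) ∩ blackNbrs G Prt P₂ = ∅) ∧
    ((blackNbrs G Prt P₂ ∩ (𝒱 \ {P₁ ∪ P₂})) ∩ blackNbrs G Prt P₁ = ∅) ∧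
    ((blackNbrs G Prt P₁ ∩ (𝒱 \ {P₁ ∪ P₂})) ∩
      (blackNbrs G Prt P₂ ∩ (𝒱 \ {P₁ ∪ P₂})) = ∅) ∧
    (∀ 𝒮 : Set (Set V), 𝒮 ⊆ 𝒱 \ {P₁ ∪ P₂} → (redGraphOn G 𝒮).Connected →
      𝒮 ⊆ Prt ∧ (redGraphOn G 𝒮).Connected ∧
        ∀ X ∈ 𝒮, ∀ Y ∈ 𝒮, ¬ blackAdj G X Y) :=
  stmt14_general G Prt P₁ P₂ Prt' hPrt' 𝒱 hH hPstar
end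

section
/- Let t be a positive integer, G a finite simple graph, 𝒫 a partition of V(G), and P_1 ≠ P_2 two parts of 𝒫; let 𝒫' be the partition obtained from 𝒫 by merging P_1 and P_2 into P* = P_1 ∪ P_2. Let H be a nonempty connected red-induced subtrigraph of G/𝒫' with P* ∈ V(H) ∪ (R_{G/𝒫'}(V(H)) \ B_{G/𝒫'}(V(H))), and assume that the subgraph of the red graph ℛ(G/𝒫') induced on V(H) ∪ {P*} is connected and every spanning tree of it has at most t leaves. For j = 1, 2, let 𝒬_j = B_{G/𝒫}(P_j) ∩ (V(H) \ {P*}). Let F be the graph whose vertices are the parts (V(H) \ {P*}) ∪ {P_1, P_2}, with two parts adjacent exactly when they are joined by a black or a red edge of G/𝒫. Let 𝒪 ⊆ {P_1, P_2} ∪ 𝒬_1 ∪ 𝒬_2 satisfy, for each j ∈ {1, 2}: (i) if 𝒬_j ∩ 𝒪 ≠ ∅, then 𝒬_j ⊆ 𝒪; and (ii) if 𝒬_j \ 𝒪 ≠ ∅, then P_j ∈ 𝒪. Then the graph F − 𝒪 has at most t + 2 connected components. -/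
open SimpleGraph

/-- The graph induced on a set of parts, with two distinct parts adjacent exactly when
they are joined by a black or a red edge of the quotient trigraph. -/
def totalGraphOn {V : Type*} (G : SimpleGraph V) (F : Set (Set V)) :
    SimpleGraph ↥F where
  Adj X Y := blackAdj G (X : Set V) (Y : Set V) ∨ redAdj G (X : Set V) (Y : Set V)
  symm := by
    constructor
    rintro X Y (⟨hne, hc⟩ | ⟨hne, hc, ha⟩)
    · exact Or.inl ⟨hne.symm, fun x hx y hy => (hc y hy x hx).symm⟩
    · exact Or.inr ⟨hne.symm, fun hc' => hc fun x hx y hy => (hc' y hy x hx).symm,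
        fun ha' => ha fun x hx y hy hadj => ha' y hy x hx hadj.symm⟩
  loopless := by
    constructor
    rintro X (⟨hne, -⟩ | ⟨hne, -⟩) <;> exact hne rfl

/-!
Take a spanning tree `T` of the red graph on `V(H) ∪ {P*}` that keeps every red edge at `P*`.
Every part of `𝒪` other than `P₁, P₂` is a black neighbour of `P₁` or `P₂`, hence meets `P*` by
an edge, and it is not complete to `P*` since `P*` has no black neighbour in `V(H)`: so it is a
red neighbour of `P*`, adjacent to `P*` in `T`. Every other vertex of `F - 𝒪` lies in `T` minus
the star at `P*` spanned by `𝒪`, and there it reaches a leaf of `T` (a vertex farthest from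
`P*`). As red edges are edges of `F`, every component of `F - 𝒪` contains `P₁`, `P₂` or a leaf.
-/

namespace SimpleGraph

variable {α β : Type*}

lemma Connected.exists_isTree_le_and_adj_of_adj {G : SimpleGraph α} (hG : G.Connected) (r : α) :
    ∃ T ≤ G, T.IsTree ∧ ∀ v, G.Adj r v → T.Adj r v := by
  obtain ⟨T, hST, hTG, hT⟩ := hG.exists_isTree_le_of_le_of_isAcyclic (H := G ⊓ starGraph r)
    inf_le_left ((isAcyclic_starGraph r).anti inf_le_right)
  exact ⟨T, hTG, hT, fun v hv => hST ⟨hv, starGraph_center_adj hv.ne⟩⟩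

variable {T : SimpleGraph α}

lemma IsTree.eq_penultimate_of_adj_of_dist_lt (hT : T.IsTree) {r y z : α} {p : T.Walk r y}
    (hp : p.IsPath) (hadj : T.Adj y z) (hz : T.dist r z < T.dist r y) : z = p.penultimate := by
  classical
  obtain ⟨q, hq, hql⟩ := hT.connected.exists_path_of_dist r z
  have hy : y ∉ q.support := fun hy => by
    have := dist_le (q.takeUntil y hy)
    have := q.length_takeUntil_le_length hy
    omega
  exact hT.isAcyclic.eq_penultimate_of_adj_end hp hadj
    (hT.isAcyclic.mem_support_of_ne_mem_support_of_adj_of_isPath hp hq hadj hy)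

/-- A vertex of the component farthest from `r` has no neighbour farther away, since such a
neighbour could not be adjacent to `r`; so its only neighbour is its parent. -/
lemma IsTree.exists_leaf_reachable_induce_compl [Finite α] (hT : T.IsTree) {r : α} {D : Set α}
    (hD : ∀ d ∈ D, T.Adj r d) (x : ↥(insert r D)ᶜ) :
    ∃ l : ↥(insert r D)ᶜ, (T.neighborSet l).ncard = 1 ∧ (T.induce (insert r D)ᶜ).Reachable x l := by
  obtain ⟨y, hxy, hmax⟩ := Set.exists_max_image {y | (T.induce (insert r D)ᶜ).Reachable x y}
    (fun y => T.dist r y) (Set.toFinite _) ⟨x, .rfl⟩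
  refine ⟨y, ?_, hxy⟩
  have hry : r ≠ y := fun h => y.2 (h ▸ Set.mem_insert r D)
  obtain ⟨p, hp, -⟩ := hT.connected.exists_path_of_dist r y
  suffices T.neighborSet y = {p.penultimate} by rw [this, Set.ncard_singleton]
  refine Set.eq_singleton_iff_unique_mem.2 ⟨(p.adj_penultimate (Walk.not_nil_of_ne hry)).symm,
    fun z hz => ?_⟩
  rcases hT.dist_eq_dist_add_one_of_adj r hz with h | h
  · exact hT.eq_penultimate_of_adj_of_dist_lt hp hz (by omega)
  · have hzB : z ∉ insert r D := by
      rintro (rfl | hzD)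
      · simp at h
      · have := dist_eq_one_iff_adj.2 (hD z hzD)
        have := hT.connected.pos_dist_of_ne hry
        omega
    have := hmax ⟨z, hzB⟩ (hxy.trans (Adj.reachable (induce_adj.2 hz)))
    simp only at this
    omega

lemma card_connectedComponent_le_ncard [Finite α] {G : SimpleGraph α} (A : Set α)
    (hA : ∀ v, ∃ a ∈ A, G.Reachable v a) : Nat.card G.ConnectedComponent ≤ A.ncard := by
  rw [← Nat.card_coe_set_eq]
  refine Nat.card_le_card_of_surjective (fun a : A => G.connectedComponentMk a) ?_
  rintro ⟨v⟩
  obtain ⟨a, ha, hva⟩ := hA v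
  exact ⟨⟨a, ha⟩, (ConnectedComponent.sound hva).symm⟩

/-- Each component of `F` meets `E` or the image of a component of `T - (r + D)`, and each of the
latter contains a leaf of `T`. -/
lemma IsTree.card_connectedComponent_le [Finite α] [Finite β] {F : SimpleGraph β}
    (hT : T.IsTree) {r : α} {D : Set α} (hD : ∀ d ∈ D, T.Adj r d)
    (φ : T.induce (insert r D)ᶜ →g F) (E : Set β) (hE : ∀ b ∉ E, b ∈ Set.range φ) :
    Nat.card F.ConnectedComponent ≤ {v | (T.neighborSet v).ncard = 1}.ncard + E.ncard := by
  set L : Set ↥(insert r D)ᶜ := {l | (T.neighborSet l).ncard = 1}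
  calc Nat.card F.ConnectedComponent ≤ (φ '' L ∪ E).ncard := by
        refine card_connectedComponent_le_ncard _ fun b => ?_
        by_cases hb : b ∈ E
        · exact ⟨b, Or.inr hb, .rfl⟩
        obtain ⟨x, rfl⟩ := hE b hb
        obtain ⟨l, hl, hxl⟩ := hT.exists_leaf_reachable_induce_compl hD x
        exact ⟨φ l, Or.inl ⟨l, hl, rfl⟩, hxl.map φ⟩
    _ ≤ (φ '' L).ncard + E.ncard := Set.ncard_union_le _ _
    _ ≤ L.ncard + E.ncard := by gcongr; exact Set.ncard_image_le
    _ ≤ {v | (T.neighborSet v).ncard = 1}.ncard + E.ncard := by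
        gcongr
        exact Set.ncard_le_ncard_of_injOn Subtype.val (fun l hl => hl) Subtype.val_injective.injOn

end SimpleGraph

section QuotientTrigraph

variable {V : Type*} {G : SimpleGraph V}

lemma IsCompleteTo.symm {X Y : Set V} (h : IsCompleteTo G X Y) : IsCompleteTo G Y X :=
  fun y hy x hx => (h x hx y hy).symm

lemma redAdj_of_isCompleteTo_subset {X Y Z : Set V} (hXY : X ≠ Y) (hX : ¬ IsCompleteTo G X Y)
    (hZX : Z ⊆ X) (hZ : Z.Nonempty) (hY : Y.Nonempty) (hZY : IsCompleteTo G Z Y) :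
    redAdj G X Y := by
  obtain ⟨z, hz⟩ := hZ
  obtain ⟨y, hy⟩ := hY
  exact ⟨hXY, hX, fun h => h z (hZX hz) y hy (hZY z hz y hy)⟩

lemma Setoid.IsPartition.union_ne_left {Prt : Set (Set V)} (hpart : Setoid.IsPartition Prt)
    {P₁ P₂ : Set V} (hP₁ : P₁ ∈ Prt) (hP₂ : P₂ ∈ Prt) (hP₁₂ : P₁ ≠ P₂) : P₁ ∪ P₂ ≠ P₁ := by
  rw [Ne, Set.union_eq_left]
  intro h
  have hdisj := hpart.pairwiseDisjoint hP₂ hP₁ hP₁₂.symm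
  exact Setoid.nonempty_of_mem_partition hpart hP₂ |>.ne_empty (hdisj.eq_bot_of_le h)

lemma Setoid.IsPartition.notMem_of_subset_merge {Prt 𝒱 : Set (Set V)}
    (hpart : Setoid.IsPartition Prt) {P₁ P₂ : Set V} (hP₁ : P₁ ∈ Prt) (hP₂ : P₂ ∈ Prt)
    (hP₁₂ : P₁ ≠ P₂) (h𝒱 : 𝒱 ⊆ insert (P₁ ∪ P₂) (Prt \ {P₁, P₂})) :
    ∀ P ∈ ({P₁, P₂} : Set (Set V)), P ∉ 𝒱 ∪ {P₁ ∪ P₂} := by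
  have hne : ∀ P ∈ ({P₁, P₂} : Set (Set V)), P ≠ P₁ ∪ P₂ := by
    rintro P (rfl | rfl)
    · exact (hpart.union_ne_left hP₁ hP₂ hP₁₂).symm
    · rw [Set.union_comm]
      exact (hpart.union_ne_left hP₂ hP₁ hP₁₂.symm).symm
  rintro P hP (hP𝒱 | rfl)
  · rcases h𝒱 hP𝒱 with h | h
    · exact hne P hP h
    · exact h.2 hP
  · exact hne _ hP rfl

lemma not_blackAdj_of_mem {Prt 𝒱 : Set (Set V)} {P Q : Set V}
    (h𝒱 : ∀ X ∈ 𝒱, ∀ Y ∈ 𝒱, ¬ blackAdj G X Y)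
    (hP : P ∈ 𝒱 ∨ (P ∈ redNbrsOfSet G Prt 𝒱 ∧ P ∉ blackNbrsOfSet G Prt 𝒱)) (hQ : Q ∈ 𝒱) :
    ¬ blackAdj G Q P := by
  rcases hP with hP | ⟨hred, hblack⟩
  · exact h𝒱 Q hQ P hP
  · exact fun h => hblack ⟨hred.1, hred.2.1, Q, hQ, h⟩

lemma redAdj_of_mem_blackNbrs {Prt Prt' 𝒱 : Set (Set V)} {P Z Q : Set V}
    (hpart : Setoid.IsPartition Prt) (hZ : Z ∈ Prt) (hZP : Z ⊆ P)
    (h𝒱 : ∀ X ∈ 𝒱, ∀ Y ∈ 𝒱, ¬ blackAdj G X Y)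
    (hP : P ∈ 𝒱 ∨ (P ∈ redNbrsOfSet G Prt' 𝒱 ∧ P ∉ blackNbrsOfSet G Prt' 𝒱))
    (hQ : Q ∈ blackNbrs G Prt Z ∩ (𝒱 \ {P})) : redAdj G P Q := by
  obtain ⟨⟨hQPrt, -, hZQ⟩, hQ𝒱, hQP⟩ := hQ
  have hPQ : P ≠ Q := fun h => hQP h.symm
  exact redAdj_of_isCompleteTo_subset hPQ
    (fun h => not_blackAdj_of_mem h𝒱 hP hQ𝒱 ⟨hPQ.symm, h.symm⟩)
    hZP (Setoid.nonempty_of_mem_partition hpart hZ)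
    (Setoid.nonempty_of_mem_partition hpart hQPrt) hZQ

lemma redAdj_union_of_mem_of_subset {Prt Prt' 𝒱 𝒪 : Set (Set V)} (hpart : Setoid.IsPartition Prt)
    {P₁ P₂ : Set V} (hP₁ : P₁ ∈ Prt) (hP₂ : P₂ ∈ Prt)
    (hP𝒱 : ∀ P ∈ ({P₁, P₂} : Set (Set V)), P ∉ 𝒱 ∪ {P₁ ∪ P₂})
    (h𝒱 : ∀ X ∈ 𝒱, ∀ Y ∈ 𝒱, ¬ blackAdj G X Y)
    (hP : P₁ ∪ P₂ ∈ 𝒱 ∨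
      (P₁ ∪ P₂ ∈ redNbrsOfSet G Prt' 𝒱 ∧ P₁ ∪ P₂ ∉ blackNbrsOfSet G Prt' 𝒱))
    (h𝒪 : 𝒪 ⊆ {P₁, P₂} ∪ (blackNbrs G Prt P₁ ∩ (𝒱 \ {P₁ ∪ P₂}))
      ∪ (blackNbrs G Prt P₂ ∩ (𝒱 \ {P₁ ∪ P₂})))
    {Q : Set V} (hQ𝒪 : Q ∈ 𝒪) (hQ𝒱 : Q ∈ 𝒱 ∪ {P₁ ∪ P₂}) : redAdj G (P₁ ∪ P₂) Q := by
  rcases h𝒪 hQ𝒪 with (hQ | hQ) | hQ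
  · exact absurd hQ𝒱 (hP𝒱 Q hQ)
  · exact redAdj_of_mem_blackNbrs hpart hP₁ Set.subset_union_left h𝒱 hP hQ
  · exact redAdj_of_mem_blackNbrs hpart hP₂ Set.subset_union_right h𝒱 hP hQ

end QuotientTrigraph

theorem stmt15_general {V : Type*} [Fintype V] (t : ℕ) (G : SimpleGraph V)
    (Prt : Set (Set V)) (hpart : Setoid.IsPartition Prt)
    (P₁ P₂ : Set V) (hP₁ : P₁ ∈ Prt) (hP₂ : P₂ ∈ Prt) (hP₁₂ : P₁ ≠ P₂)
    (Prt' : Set (Set V)) (hPrt' : Prt' = insert (P₁ ∪ P₂) (Prt \ {P₁, P₂}))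
    (𝒱 : Set (Set V))
    (hH : ConnectedRedInduced G Prt' 𝒱)
    (hPstar : P₁ ∪ P₂ ∈ 𝒱 ∨
      (P₁ ∪ P₂ ∈ redNbrsOfSet G Prt' 𝒱 ∧ P₁ ∪ P₂ ∉ blackNbrsOfSet G Prt' 𝒱))
    (hconn : (redGraphOn G (𝒱 ∪ {P₁ ∪ P₂})).Connected)
    (hleaf : MaxLeafLE (redGraphOn G (𝒱 ∪ {P₁ ∪ P₂})) t)
    (𝒪 : Set (Set V))
    (h𝒪 : 𝒪 ⊆ {P₁, P₂} ∪ (blackNbrs G Prt P₁ ∩ (𝒱 \ {P₁ ∪ P₂}))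
      ∪ (blackNbrs G Prt P₂ ∩ (𝒱 \ {P₁ ∪ P₂}))) :
    Nat.card
      ((totalGraphOn G (((𝒱 \ {P₁ ∪ P₂}) ∪ {P₁, P₂}) \ 𝒪)).ConnectedComponent)
      ≤ t + 2 := by
  have hP𝒱 := hpart.notMem_of_subset_merge hP₁ hP₂ hP₁₂ (hPrt' ▸ hH.1)
  let r : ↥(𝒱 ∪ {P₁ ∪ P₂}) := ⟨P₁ ∪ P₂, Or.inr rfl⟩
  obtain ⟨T, hTR, hT, hTr⟩ := hconn.exists_isTree_le_and_adj_of_adj r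
  let D : Set ↥(𝒱 ∪ {P₁ ∪ P₂}) := {w | w.val ∈ 𝒪}
  have hD : ∀ d ∈ D, T.Adj r d := fun d hd =>
    hTr d (redAdj_union_of_mem_of_subset hpart hP₁ hP₂ hP𝒱 hH.2.1 hPstar h𝒪 hd d.2)
  have hS : ∀ w : ↥(insert r D)ᶜ, w.val.val ∈ ((𝒱 \ {P₁ ∪ P₂}) ∪ {P₁, P₂}) \ 𝒪 := by
    rintro ⟨⟨Q, hQ⟩, hQB⟩
    simp only [Set.mem_compl_iff, Set.mem_insert_iff, not_or] at hQB
    have hQr : Q ≠ P₁ ∪ P₂ := fun h => hQB.1 (Subtype.ext h)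
    exact ⟨Or.inl ⟨hQ.resolve_right hQr, hQr⟩, hQB.2⟩
  let φ : T.induce (insert r D)ᶜ →g totalGraphOn G (((𝒱 \ {P₁ ∪ P₂}) ∪ {P₁, P₂}) \ 𝒪) :=
    ⟨fun w => ⟨w.val.val, hS w⟩, fun h => Or.inr (hTR h)⟩
  have hE : ∀ Q ∉ Subtype.val ⁻¹' {P₁, P₂}, Q ∈ Set.range φ := by
    rintro ⟨Q, (hQ | hQ), hQ𝒪⟩ hQP
    · have hQr : (⟨Q, Or.inl hQ.1⟩ : ↥(𝒱 ∪ {P₁ ∪ P₂})) ∉ insert r D := by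
        rintro (h | h)
        · exact hQ.2 (congrArg Subtype.val h)
        · exact hQ𝒪 h
      exact ⟨⟨_, hQr⟩, rfl⟩
    · exact absurd hQ hQP
  calc _ ≤ {v | (T.neighborSet v).ncard = 1}.ncard + (Subtype.val ⁻¹' {P₁, P₂}).ncard :=
        hT.card_connectedComponent_le hD φ _ hE
    _ ≤ t + 2 := by
        refine add_le_add (hleaf T hTR hT) ((Set.ncard_pair hP₁₂).le.trans' ?_)
        exact Set.ncard_le_ncard_of_injOn Subtype.val (fun _ h => h) Subtype.val_injective.injOn

theorem stmt15 {V : Type*} [Fintype V] (t : ℕ) (ht : 0 < t) (G : SimpleGraph V)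
    (Prt : Set (Set V)) (hpart : Setoid.IsPartition Prt)
    (P₁ P₂ : Set V) (hP₁ : P₁ ∈ Prt) (hP₂ : P₂ ∈ Prt) (hP₁₂ : P₁ ≠ P₂)
    (Prt' : Set (Set V)) (hPrt' : Prt' = insert (P₁ ∪ P₂) (Prt \ {P₁, P₂}))
    (𝒱 : Set (Set V)) (h𝒱 : 𝒱.Nonempty)
    (hH : ConnectedRedInduced G Prt' 𝒱)
    (hPstar : P₁ ∪ P₂ ∈ 𝒱 ∨
      (P₁ ∪ P₂ ∈ redNbrsOfSet G Prt' 𝒱 ∧ P₁ ∪ P₂ ∉ blackNbrsOfSet G Prt' 𝒱))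
    (hconn : (redGraphOn G (𝒱 ∪ {P₁ ∪ P₂})).Connected)
    (hleaf : MaxLeafLE (redGraphOn G (𝒱 ∪ {P₁ ∪ P₂})) t)
    (𝒪 : Set (Set V))
    (h𝒪 : 𝒪 ⊆ {P₁, P₂} ∪ (blackNbrs G Prt P₁ ∩ (𝒱 \ {P₁ ∪ P₂}))
      ∪ (blackNbrs G Prt P₂ ∩ (𝒱 \ {P₁ ∪ P₂})))
    (h𝒪₁ : (𝒪 ∩ (blackNbrs G Prt P₁ ∩ (𝒱 \ {P₁ ∪ P₂}))).Nonempty →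
      blackNbrs G Prt P₁ ∩ (𝒱 \ {P₁ ∪ P₂}) ⊆ 𝒪)
    (h𝒪₂ : (𝒪 ∩ (blackNbrs G Prt P₂ ∩ (𝒱 \ {P₁ ∪ P₂}))).Nonempty →
      blackNbrs G Prt P₂ ∩ (𝒱 \ {P₁ ∪ P₂}) ⊆ 𝒪)
    (h𝒪₁' : ((blackNbrs G Prt P₁ ∩ (𝒱 \ {P₁ ∪ P₂})) \ 𝒪).Nonempty → P₁ ∈ 𝒪)
    (h𝒪₂' : ((blackNbrs G Prt P₂ ∩ (𝒱 \ {P₁ ∪ P₂})) \ 𝒪).Nonempty → P₂ ∈ 𝒪) :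
    Nat.card
      ((totalGraphOn G (((𝒱 \ {P₁ ∪ P₂}) ∪ {P₁, P₂}) \ 𝒪)).ConnectedComponent)
      ≤ t + 2 :=
  stmt15_general t G Prt hpart P₁ P₂ hP₁ hP₂ hP₁₂ Prt' hPrt' 𝒱 hH hPstar hconn hleaf 𝒪 h𝒪
end

section
/- Let G be a finite simple graph, 𝒫 a partition of V(G), P_1 ≠ P_2 two parts of 𝒫, and for i = 1, 2 let 𝒬_i ⊆ B_{G/𝒫}(P_i) \ B_{G/𝒫}(P_{3−i}). Let α be a nonnegative integer. Then the number of σ-separators with respect to (P_1, P_2, 𝒬_1, 𝒬_2) with parameter α is at most 4 · |V(G)|^{4α}. -/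
open SimpleGraph

/-- `(𝒪, U)` is a `σ`-separator with respect to `(P₁, P₂, 𝒬₁, 𝒬₂)` with parameter `α`. -/
def IsSigmaSeparator {V : Type*} (G : SimpleGraph V)
    (P₁ P₂ : Set V) (𝒬₁ 𝒬₂ : Set (Set V)) (α : ℕ)
    (𝒪 : Set (Set V)) (U : Set V) : Prop :=
  𝒪 ⊆ {P₁, P₂} ∪ 𝒬₁ ∪ 𝒬₂ ∧
  U ⊆ ⋃₀ 𝒪 ∧
  (∀ Q ∈ 𝒪, (U ∩ Q).ncard ≤ α) ∧
  ((𝒪 ∩ 𝒬₁).Nonempty →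
    insert P₁ 𝒬₁ ⊆ 𝒪 ∧ (U ∩ ⋃₀ 𝒬₁).ncard ≤ α ∧ ∀ Q ∈ 𝒬₁, (U ∩ Q).Nonempty) ∧
  ((𝒪 ∩ 𝒬₂).Nonempty →
    insert P₂ 𝒬₂ ⊆ 𝒪 ∧ (U ∩ ⋃₀ 𝒬₂).ncard ≤ α ∧ ∀ Q ∈ 𝒬₂, (U ∩ Q).Nonempty) ∧
  (∀ v ∈ U, (U ∩ G.neighborSet v).ncard ≤ α) ∧
  (∀ Q ∈ ({P₁, P₂} ∪ 𝒬₁ ∪ 𝒬₂) \ 𝒪, ∀ Q' ∈ {P₁, P₂} ∪ 𝒬₁ ∪ 𝒬₂,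
    blackAdj G Q Q' → Q' ∈ 𝒪 ∧ U ∩ Q' = ∅)

/-!
A σ-separator `(𝒪, U)` is determined by `U` and `𝒪 ∩ {P₁, P₂}`: the parts are pairwise disjoint
and `U ⊆ ⋃₀ 𝒪`, so by condition (b) a part of `𝒬₁ ∪ 𝒬₂` lies in `𝒪` exactly when it meets `U`.
Moreover `U` lives in `P₁ ∪ P₂ ∪ ⋃₀ 𝒬₁ ∪ ⋃₀ 𝒬₂` and meets each of these in at most `α` vertices,
so `|U| ≤ 4α`. This leaves at most `4 · ∑_{k ≤ 4α} (n choose k)` separators, and the binomial sum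
is at most `n ^ (4α)` because `n ≥ 2`.
-/

open Finset
open scoped Nat

theorem Nat.sum_range_choose_le_pow {n m : ℕ} (hn : 2 ≤ n) (hm : m ≠ 1) :
    ∑ k ∈ range (m + 1), n.choose k ≤ n ^ m := by
  obtain rfl | hm₂ : m = 0 ∨ 2 ≤ m := by omega
  · simp
  clear hm
  induction m, hm₂ using Nat.le_induction with
  | base =>
    have h₂ : 2 * n.choose 2 = n * (n - 1) := by
      rw [Nat.choose_two_right, Nat.mul_div_cancel' (Nat.even_mul_pred_self n).two_dvd]
    obtain ⟨k, rfl⟩ := Nat.exists_eq_add_of_le hn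
    simp only [sum_range_succ, sum_range_zero, Nat.choose_zero_right, Nat.choose_one_right]
    rw [show 2 + k - 1 = k + 1 by omega] at h₂
    nlinarith
  | succ m hm₂ ih =>
    have hchoose : 2 * n.choose (m + 1) ≤ n ^ (m + 1) :=
      calc 2 * n.choose (m + 1) ≤ (m + 1)! * n.choose (m + 1) :=
            Nat.mul_le_mul_right _ (Nat.one_lt_factorial.2 (by omega))
        _ = n.descFactorial (m + 1) := (Nat.descFactorial_eq_factorial_mul_choose _ _).symm
        _ ≤ n ^ (m + 1) := Nat.descFactorial_le_pow _ _
    have hpow : 2 * n ^ m ≤ n ^ (m + 1) := by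
      rw [pow_succ']; exact Nat.mul_le_mul_right _ hn
    rw [sum_range_succ]
    omega

theorem Set.ncard_setOf_ncard_lt {V : Type*} [Finite V] (m : ℕ) :
    {U : Set V | U.ncard < m}.ncard = ∑ k ∈ Finset.range m, (Nat.card V).choose k := by
  induction m with
  | zero => simp
  | succ m ih =>
    have hsplit : {U : Set V | U.ncard < m + 1} =
        {U : Set V | U.ncard < m} ∪ {U ⊆ Set.univ | U.ncard = m} := by
      ext U; simp only [Set.mem_ofPred_eq, Set.mem_union, Set.subset_univ, true_and]; omega
    have hdisj : Disjoint {U : Set V | U.ncard < m} {U ⊆ Set.univ | U.ncard = m} :=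
      Set.disjoint_left.2 fun U hlt heq => (ne_of_lt hlt) heq.2
    rw [hsplit, Set.ncard_union_eq hdisj, ih, Set.ncard_powerset_ncard Set.finite_univ,
      Set.ncard_univ, sum_range_succ]

theorem Setoid.IsPartition.two_le_card {V : Type*} [Finite V] {c : Set (Set V)}
    (hc : Setoid.IsPartition c) {P₁ P₂ : Set V} (hP₁ : P₁ ∈ c) (hP₂ : P₂ ∈ c) (hne : P₁ ≠ P₂) :
    2 ≤ Nat.card V := by
  obtain ⟨x, hx⟩ := Set.nonempty_iff_ne_empty.2 (ne_of_mem_of_not_mem hP₁ hc.1)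
  obtain ⟨y, hy⟩ := Set.nonempty_iff_ne_empty.2 (ne_of_mem_of_not_mem hP₂ hc.1)
  refine Finite.one_lt_card_iff_nontrivial.2 ⟨x, y, fun hxy => hne ?_⟩
  exact hc.pairwiseDisjoint.elim_set hP₁ hP₂ x hx (hxy ▸ hy)

namespace IsSigmaSeparator

variable {V : Type*} {G : SimpleGraph V} {P₁ P₂ : Set V} {𝒬₁ 𝒬₂ : Set (Set V)} {α : ℕ}
  {𝒪 : Set (Set V)} {U : Set V}

theorem symm (h : IsSigmaSeparator G P₁ P₂ 𝒬₁ 𝒬₂ α 𝒪 U) :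
    IsSigmaSeparator G P₂ P₁ 𝒬₂ 𝒬₁ α 𝒪 U := by
  obtain ⟨hsub, hU, hpart, h₁, h₂, hdeg, hblack⟩ := h
  have hfamily : ({P₂, P₁} ∪ 𝒬₂ ∪ 𝒬₁ : Set (Set V)) = {P₁, P₂} ∪ 𝒬₁ ∪ 𝒬₂ := by
    rw [Set.pair_comm, Set.union_right_comm]
  rw [IsSigmaSeparator, hfamily]
  exact ⟨hsub, hU, hpart, h₂, h₁, hdeg, hblack⟩

theorem mem_of_inter_nonempty (h : IsSigmaSeparator G P₁ P₂ 𝒬₁ 𝒬₂ α 𝒪 U)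
    (hdisj : ({P₁, P₂} ∪ 𝒬₁ ∪ 𝒬₂ : Set (Set V)).PairwiseDisjoint id) {Q : Set V}
    (hQ : Q ∈ ({P₁, P₂} ∪ 𝒬₁ ∪ 𝒬₂ : Set (Set V))) (hUQ : (U ∩ Q).Nonempty) : Q ∈ 𝒪 := by
  obtain ⟨u, huU, huQ⟩ := hUQ
  obtain ⟨O, hO, huO⟩ := h.2.1 huU
  rwa [hdisj.elim_set hQ (h.1 hO) u huQ huO]

theorem ncard_inter_le (h : IsSigmaSeparator G P₁ P₂ 𝒬₁ 𝒬₂ α 𝒪 U)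
    (hdisj : ({P₁, P₂} ∪ 𝒬₁ ∪ 𝒬₂ : Set (Set V)).PairwiseDisjoint id) {Q : Set V}
    (hQ : Q ∈ ({P₁, P₂} ∪ 𝒬₁ ∪ 𝒬₂ : Set (Set V))) : (U ∩ Q).ncard ≤ α := by
  by_cases hQ𝒪 : Q ∈ 𝒪
  · exact h.2.2.1 Q hQ𝒪
  · rw [Set.not_nonempty_iff_eq_empty.1 (mt (h.mem_of_inter_nonempty hdisj hQ) hQ𝒪),
      Set.ncard_empty]
    exact Nat.zero_le α

theorem ncard_inter_sUnion_left_le (h : IsSigmaSeparator G P₁ P₂ 𝒬₁ 𝒬₂ α 𝒪 U)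
    (hdisj : ({P₁, P₂} ∪ 𝒬₁ ∪ 𝒬₂ : Set (Set V)).PairwiseDisjoint id) :
    (U ∩ ⋃₀ 𝒬₁).ncard ≤ α := by
  by_cases h𝒪 : (𝒪 ∩ 𝒬₁).Nonempty
  · exact (h.2.2.2.1 h𝒪).2.1
  · suffices U ∩ ⋃₀ 𝒬₁ = ∅ by rw [this, Set.ncard_empty]; exact Nat.zero_le α
    refine Set.eq_empty_of_forall_notMem fun u ⟨huU, Q, hQ, huQ⟩ => h𝒪 ⟨Q, ?_, hQ⟩
    exact h.mem_of_inter_nonempty hdisj (Or.inl (Or.inr hQ)) ⟨u, huU, huQ⟩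

theorem ncard_le (h : IsSigmaSeparator G P₁ P₂ 𝒬₁ 𝒬₂ α 𝒪 U)
    (hdisj : ({P₁, P₂} ∪ 𝒬₁ ∪ 𝒬₂ : Set (Set V)).PairwiseDisjoint id) :
    U.ncard ≤ 4 * α := by
  have hdisj' : ({P₂, P₁} ∪ 𝒬₂ ∪ 𝒬₁ : Set (Set V)).PairwiseDisjoint id := by
    rwa [Set.pair_comm, Set.union_right_comm]
  have hcover : U = (U ∩ P₁) ∪ (U ∩ P₂) ∪ (U ∩ ⋃₀ 𝒬₁) ∪ (U ∩ ⋃₀ 𝒬₂) := by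
    refine Set.Subset.antisymm (fun u hu => ?_) (by simp only [Set.union_subset_iff,
      Set.inter_subset_left, and_self])
    obtain ⟨O, hO, huO⟩ := h.2.1 hu
    rcases h.1 hO with ((rfl | rfl) | hO₁) | hO₂
    · exact Or.inl (Or.inl (Or.inl ⟨hu, huO⟩))
    · exact Or.inl (Or.inl (Or.inr ⟨hu, huO⟩))
    · exact Or.inl (Or.inr ⟨hu, O, hO₁, huO⟩)
    · exact Or.inr ⟨hu, O, hO₂, huO⟩
  calc U.ncard = ((U ∩ P₁) ∪ (U ∩ P₂) ∪ (U ∩ ⋃₀ 𝒬₁) ∪ (U ∩ ⋃₀ 𝒬₂)).ncard :=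
        congrArg Set.ncard hcover
    _ ≤ (U ∩ P₁).ncard + (U ∩ P₂).ncard + (U ∩ ⋃₀ 𝒬₁).ncard + (U ∩ ⋃₀ 𝒬₂).ncard := by
        grw [Set.ncard_union_le, Set.ncard_union_le, Set.ncard_union_le]
    _ ≤ α + α + α + α := by
        gcongr
        · exact h.ncard_inter_le hdisj (by simp)
        · exact h.ncard_inter_le hdisj (by simp)
        · exact h.ncard_inter_sUnion_left_le hdisj
        · exact h.symm.ncard_inter_sUnion_left_le hdisj'
    _ = 4 * α := by ring

theorem eq_inter_pair_union (h : IsSigmaSeparator G P₁ P₂ 𝒬₁ 𝒬₂ α 𝒪 U)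
    (hdisj : ({P₁, P₂} ∪ 𝒬₁ ∪ 𝒬₂ : Set (Set V)).PairwiseDisjoint id) :
    𝒪 = 𝒪 ∩ {P₁, P₂} ∪ {Q ∈ 𝒬₁ ∪ 𝒬₂ | (U ∩ Q).Nonempty} := by
  refine Set.Subset.antisymm (fun Q hQ => ?_) (Set.union_subset Set.inter_subset_left ?_)
  · rcases h.1 hQ with (hP | hQ₁) | hQ₂
    · exact Or.inl ⟨hQ, hP⟩
    · exact Or.inr ⟨Or.inl hQ₁, (h.2.2.2.1 ⟨Q, hQ, hQ₁⟩).2.2 Q hQ₁⟩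
    · exact Or.inr ⟨Or.inr hQ₂, (h.2.2.2.2.1 ⟨Q, hQ, hQ₂⟩).2.2 Q hQ₂⟩
  · rintro Q ⟨hQ₁ | hQ₂, hUQ⟩
    · exact h.mem_of_inter_nonempty hdisj (Or.inl (Or.inr hQ₁)) hUQ
    · exact h.mem_of_inter_nonempty hdisj (Or.inr hQ₂) hUQ

end IsSigmaSeparator

theorem ncard_setOf_isSigmaSeparator_le {V : Type*} [Finite V] (G : SimpleGraph V)
    {P₁ P₂ : Set V} (hP₁₂ : P₁ ≠ P₂) {𝒬₁ 𝒬₂ : Set (Set V)}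
    (hdisj : ({P₁, P₂} ∪ 𝒬₁ ∪ 𝒬₂ : Set (Set V)).PairwiseDisjoint id) (α : ℕ) :
    {p : Set (Set V) × Set V | IsSigmaSeparator G P₁ P₂ 𝒬₁ 𝒬₂ α p.1 p.2}.ncard ≤
      4 * {U : Set V | U.ncard < 4 * α + 1}.ncard := by
  have hmaps : ∀ p ∈ {p : Set (Set V) × Set V | IsSigmaSeparator G P₁ P₂ 𝒬₁ 𝒬₂ α p.1 p.2},
      (p.1 ∩ {P₁, P₂}, p.2) ∈ 𝒫 {P₁, P₂} ×ˢ {U : Set V | U.ncard < 4 * α + 1} :=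
    fun p hp => ⟨Set.inter_subset_right, Nat.lt_succ_of_le (hp.ncard_le hdisj)⟩
  have hinj : Set.InjOn (fun p : Set (Set V) × Set V => (p.1 ∩ {P₁, P₂}, p.2))
      {p | IsSigmaSeparator G P₁ P₂ 𝒬₁ 𝒬₂ α p.1 p.2} := by
    intro p hp p' hp' heq
    obtain ⟨h𝒪, hU⟩ := Prod.mk.inj heq
    refine Prod.ext ?_ hU
    rw [hp.eq_inter_pair_union hdisj, hp'.eq_inter_pair_union hdisj, h𝒪, hU]
  calc _ ≤ (𝒫 {P₁, P₂} ×ˢ {U : Set V | U.ncard < 4 * α + 1}).ncard :=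
        Set.ncard_le_ncard_of_injOn _ hmaps hinj
    _ = 4 * {U : Set V | U.ncard < 4 * α + 1}.ncard := by
        rw [Set.ncard_prod, Set.ncard_powerset, Set.ncard_pair hP₁₂]; rfl

theorem stmt16 {V : Type*} [Fintype V] (G : SimpleGraph V)
    (Prt : Set (Set V)) (hpart : Setoid.IsPartition Prt)
    (P₁ P₂ : Set V) (hP₁ : P₁ ∈ Prt) (hP₂ : P₂ ∈ Prt) (hP₁₂ : P₁ ≠ P₂)
    (𝒬₁ 𝒬₂ : Set (Set V))
    (h𝒬₁ : 𝒬₁ ⊆ blackNbrs G Prt P₁ \ blackNbrs G Prt P₂)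
    (h𝒬₂ : 𝒬₂ ⊆ blackNbrs G Prt P₂ \ blackNbrs G Prt P₁)
    (α : ℕ) :
    {p : Set (Set V) × Set V |
      IsSigmaSeparator G P₁ P₂ 𝒬₁ 𝒬₂ α p.1 p.2}.ncard ≤
      4 * Fintype.card V ^ (4 * α) := by
  have hfamily : ({P₁, P₂} ∪ 𝒬₁ ∪ 𝒬₂ : Set (Set V)) ⊆ Prt :=
    Set.union_subset (Set.union_subset (Set.pair_subset hP₁ hP₂) fun _ hQ => (h𝒬₁ hQ).1.1)
      fun _ hQ => (h𝒬₂ hQ).1.1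
  have hcard : 2 ≤ Fintype.card V :=
    Nat.card_eq_fintype_card (α := V) ▸ hpart.two_le_card hP₁ hP₂ hP₁₂
  calc _ ≤ 4 * {U : Set V | U.ncard < 4 * α + 1}.ncard :=
        ncard_setOf_isSigmaSeparator_le G hP₁₂ (hpart.pairwiseDisjoint.subset hfamily) α
    _ = 4 * ∑ k ∈ range (4 * α + 1), (Fintype.card V).choose k := by
        rw [Set.ncard_setOf_ncard_lt, Nat.card_eq_fintype_card]
    _ ≤ 4 * Fintype.card V ^ (4 * α) := by
        gcongr
        exact Nat.sum_range_choose_le_pow hcard (by omega)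
end
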